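/- arXiv:1603.03366 — 12 statements merged into one kernel-verified Lean document; each statement's English description precedes it below -/
import Mathlib

section
/- Let Q be a symmetric n×n matrix with negative minimum eigenvalue λ_Q and g ∈ ℝⁿ. Define h(y) = yᵀQy + 2gᵀy. Then h has no local minimum on the open unit ball {y : ‖y‖ < 1}. -/
/-!
Take an eigenvector `v` of `Q` for the eigenvalue `λ_Q < 0`. Along the line `t ↦ x + t v` the
function `h` is a quadratic polynomial in `t` with leading coefficient `λ_Q ‖v‖² < 0`, and such a
polynomial has no local minimum, so neither does `h` at `x`.
-/

open Matrix Filter Topology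

theorem not_isLocalMin_quadratic {a b c : ℝ} (hc : c < 0) :
    ¬ IsLocalMin (fun t : ℝ => a + b * t + c * t ^ 2) 0 := by
  intro hmin
  have hderiv : HasDerivAt (fun t : ℝ => a + b * t + c * t ^ 2) b 0 := by
    simpa using ((hasDerivAt_id' (0 : ℝ)).const_mul b |>.const_add a).fun_add
      ((hasDerivAt_pow 2 (0 : ℝ)).const_mul c)
  have hb : b = 0 := hmin.hasDerivAt_eq_zero hderiv
  obtain ⟨t, hle, ht⟩ :=
    ((hmin.filter_mono nhdsWithin_le_nhds).and (self_mem_nhdsWithin (s := {0}ᶜ))).exists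
  have ht2 : 0 < t ^ 2 := pow_two_pos_of_ne_zero ht
  simp only [hb] at hle
  nlinarith

theorem not_isLocalMin_of_quadratic_along_line {E : Type*} [AddCommGroup E] [Module ℝ E]
    [TopologicalSpace E] [ContinuousAdd E] [ContinuousSMul ℝ E] {f : E → ℝ} {x v : E}
    {a b c : ℝ} (hc : c < 0) (hline : ∀ t : ℝ, f (x + t • v) = a + b * t + c * t ^ 2) :
    ¬ IsLocalMin f x := by
  intro hmin
  have hmin' : IsLocalMin f (x + (0 : ℝ) • v) := by simpa using hmin
  have hcomp := hmin'.comp_continuous (g := fun t : ℝ => x + t • v) (by fun_prop)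
  exact not_isLocalMin_quadratic hc (by simpa only [Function.comp_def, hline] using hcomp)

theorem add_smul_dotProduct_mulVec_add_smul {m R : Type*} [Fintype m] [CommRing R]
    (Q : Matrix m m R) (x v : m → R) (t : R) :
    (x + t • v) ⬝ᵥ Q *ᵥ (x + t • v) =
      x ⬝ᵥ Q *ᵥ x + (v ⬝ᵥ Q *ᵥ x + x ⬝ᵥ Q *ᵥ v) * t + (v ⬝ᵥ Q *ᵥ v) * t ^ 2 := by
  simp only [mulVec_add, mulVec_smul, add_dotProduct, dotProduct_add, smul_dotProduct,
    dotProduct_smul, smul_eq_mul]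
  ring

theorem no_local_min_open_ball_general {n : ℕ} (Q : Matrix (Fin n) (Fin n) ℝ)
    (g : EuclideanSpace ℝ (Fin n)) (lamQ : ℝ)
    (hev : ∃ v : EuclideanSpace ℝ (Fin n), v ≠ 0 ∧ Q.mulVec v = lamQ • (v : Fin n → ℝ))
    (hneg : lamQ < 0) :
    ∀ x : EuclideanSpace ℝ (Fin n), ‖x‖ < 1 →
      ¬ IsLocalMin (fun y : EuclideanSpace ℝ (Fin n) => y ⬝ᵥ Q.mulVec y + 2 * (g ⬝ᵥ y)) x := by
  intro x _
  obtain ⟨v, hv0, hvQ⟩ := hev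
  have hvv : 0 < (v : Fin n → ℝ) ⬝ᵥ v := by
    simpa [star_trivial] using
      dotProduct_self_star_pos_iff.mpr (fun h => hv0 (WithLp.ofLp_injective 2 h))
  have hvQv : (v : Fin n → ℝ) ⬝ᵥ Q *ᵥ v = lamQ * ((v : Fin n → ℝ) ⬝ᵥ v) := by
    rw [hvQ, dotProduct_smul, smul_eq_mul]
  refine not_isLocalMin_of_quadratic_along_line (v := v) (a := x ⬝ᵥ Q *ᵥ x + 2 * (g ⬝ᵥ x))
    (b := v ⬝ᵥ Q *ᵥ x + x ⬝ᵥ Q *ᵥ v + 2 * (g ⬝ᵥ v)) (mul_neg_of_neg_of_pos hneg hvv) fun t => ?_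
  simp only [WithLp.ofLp_add, WithLp.ofLp_smul, add_smul_dotProduct_mulVec_add_smul, hvQv,
    dotProduct_add, dotProduct_smul, smul_eq_mul]
  ring

theorem no_local_min_open_ball {n : ℕ} (Q : Matrix (Fin n) (Fin n) ℝ)
    (g : EuclideanSpace ℝ (Fin n)) (lamQ : ℝ)
    (hQ : Q.IsSymm)
    (hlb : ∀ y : EuclideanSpace ℝ (Fin n), lamQ * ‖y‖ ^ 2 ≤ y ⬝ᵥ Q.mulVec y)
    (hev : ∃ v : EuclideanSpace ℝ (Fin n), v ≠ 0 ∧ Q.mulVec v = lamQ • (v : Fin n → ℝ))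
    (hneg : lamQ < 0) :
    ∀ x : EuclideanSpace ℝ (Fin n), ‖x‖ < 1 →
      ¬ IsLocalMin (fun y : EuclideanSpace ℝ (Fin n) => y ⬝ᵥ Q.mulVec y + 2 * (g ⬝ᵥ y)) x :=
  no_local_min_open_ball_general Q g lamQ hev hneg
end

section
/- With the setup of the aggregation lemma (f_j(y) = h(y) − α_j c_j(y), α_j ≤ 0, F = max_j f_j), the equality min_{y∈𝒞} h(y) = min_{y∈𝒞} F(y) holds if and only if there exists an optimal solution y* of min_{y∈𝒞} F(y) with α_j c_j(y*) = 0 for some index j. -/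
theorem aggregation_tightness_iff {n m : ℕ} (hm : 0 < m)
    (C : Set (EuclideanSpace ℝ (Fin n)))
    (h : EuclideanSpace ℝ (Fin n) → ℝ)
    (c : Fin m → EuclideanSpace ℝ (Fin n) → ℝ)
    (α : Fin m → ℝ) (hα : ∀ j, α j ≤ 0)
    (F : EuclideanSpace ℝ (Fin n) → ℝ)
    (hF : ∀ y, F y = ⨆ j : Fin m, (h y - α j * c j y))
    (D : Set (EuclideanSpace ℝ (Fin n)))
    (hD : D = {y ∈ C | ∀ j, c j y ≤ 0})
    (yh : EuclideanSpace ℝ (Fin n)) (hyh : yh ∈ D) (hyhmin : ∀ y ∈ D, h yh ≤ h y)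
    (yF : EuclideanSpace ℝ (Fin n)) (hyF : yF ∈ D) (hyFmin : ∀ y ∈ D, F yF ≤ F y) :
    h yh = F yF ↔
      ∃ ystar ∈ D, (∀ y ∈ D, F ystar ≤ F y) ∧ ∃ j, α j * c j ystar = 0 := by
  have hne : Nonempty (Fin m) := ⟨⟨0, hm⟩⟩
  have hpos : ∀ y ∈ D, ∀ j, 0 ≤ α j * c j y := by
    intro y hy j
    rw [hD] at hy
    nlinarith [mul_nonneg (neg_nonneg.2 (hα j)) (neg_nonneg.2 (hy.2 j))]
  have hFle : ∀ y ∈ D, F y ≤ h y := by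
    intro y hy
    rw [hF]
    exact ciSup_le fun j => by linarith [hpos y hy j]
  have hleF : ∀ y, ∀ j, h y - α j * c j y ≤ F y := by
    intro y j
    rw [hF]
    exact le_ciSup (f := fun j => h y - α j * c j y) (Set.Finite.bddAbove (Set.finite_range _)) j
  constructor
  · intro heq
    obtain ⟨j, hj⟩ := Finite.exists_max (fun j => h yh - α j * c j yh)
    have hsup : F yh = h yh - α j * c j yh := by
      refine le_antisymm ?_ (hleF yh j)
      rw [hF]; exact ciSup_le hj
    have h1 : F yF ≤ F yh := hyFmin yh hyh
    have h2 : 0 ≤ α j * c j yh := hpos yh hyh j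
    refine ⟨yh, hyh, fun y hy => ?_, j, by linarith [heq, hsup]⟩
    calc F yh = h yh - α j * c j yh := hsup
    _ ≤ F yF := by linarith [heq, hsup]
    _ ≤ F y := hyFmin y hy
  · rintro ⟨y, hy, hymin, j, hj⟩
    have h1 : h yh ≤ h y := hyhmin y hy
    have h2 : h y - α j * c j y ≤ F y := hleF y j
    have h3 : F yF ≤ h yh := le_trans (hyFmin yh hyh) (hFle yh hyh)
    have h4 : F y ≤ F yF := hymin yF hyF
    linarith [hj]
end

section
/- Let Q be symmetric with λ_Q = λ_min(Q) < 0, g ∈ ℝⁿ, h(y) = yᵀQy + 2gᵀy and f(y) = yᵀ(Q − λ_Q I)y + 2gᵀy + λ_Q. Then f is convex on ℝⁿ and f(y) ≤ h(y) for every y with ‖y‖ ≤ 1, with equality f(y) = h(y) if and only if ‖y‖ = 1. -/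
/-!
Since `yᵀ y = ‖y‖²`, the two functions differ by a constant times `1 - ‖y‖²`:
`f y = h y + λ_Q (1 - ‖y‖²)`, which is `≤ 0` on the unit ball and vanishes exactly on the
sphere because `λ_Q < 0`. Convexity holds because `Q - λ_Q I` has a nonnegative quadratic form
(`λ_Q` bounds the Rayleigh quotient from below), and a nonnegative quadratic form plus an affine
function is convex.
-/

open Matrix Set

theorem QuadraticMap.convexOn_univ_of_nonneg {E : Type*} [AddCommGroup E] [Module ℝ E]
    (q : QuadraticMap ℝ E ℝ) (hq : ∀ x, 0 ≤ q x) : ConvexOn ℝ univ q := by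
  refine ⟨convex_univ, fun x _ y _ a b ha hb hab => ?_⟩
  -- `a q x + b q y - q (a x + b y) = a b q (x - y)` when `a + b = 1`
  have hcomb : q (a • x + b • y) = a ^ 2 * q x + b ^ 2 * q y + a * b * polar q x y := by
    rw [QuadraticMap.map_add q, QuadraticMap.map_smul, QuadraticMap.map_smul,
      polar_smul_left, polar_smul_right]
    simp only [smul_eq_mul]
    ring
  have hsub : q (x - y) = q x + q y - polar q x y := by
    rw [sub_eq_add_neg, QuadraticMap.map_add q, QuadraticMap.map_neg, polar_neg_right]
    ring
  obtain rfl : b = 1 - a := by linarith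
  simp only [smul_eq_mul, hcomb]
  nlinarith [mul_nonneg (mul_nonneg ha hb) (hq (x - y))]

theorem EuclideanSpace.dotProduct_self_eq_norm_sq {ι : Type*} [Fintype ι]
    (y : EuclideanSpace ℝ ι) : (y : ι → ℝ) ⬝ᵥ y = ‖y‖ ^ 2 := by
  rw [← real_inner_self_eq_norm_sq, EuclideanSpace.inner_eq_star_dotProduct, star_trivial]

theorem Matrix.dotProduct_sub_smul_one_mulVec {ι R : Type*} [Fintype ι] [DecidableEq ι]
    [CommRing R] (Q : Matrix ι ι R) (c : R) (x : ι → R) :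
    x ⬝ᵥ (Q - c • 1) *ᵥ x = x ⬝ᵥ Q *ᵥ x - c * (x ⬝ᵥ x) := by
  rw [sub_mulVec, dotProduct_sub, smul_mulVec, one_mulVec, dotProduct_smul, smul_eq_mul]

theorem EuclideanSpace.convexOn_dotProduct_mulVec_add_affine {ι : Type*} [Fintype ι]
    [DecidableEq ι] (M : Matrix ι ι ℝ) (hM : ∀ y : EuclideanSpace ℝ ι, 0 ≤ y ⬝ᵥ M *ᵥ y)
    (g : ι → ℝ) (c : ℝ) :
    ConvexOn ℝ univ fun y : EuclideanSpace ℝ ι => y ⬝ᵥ M *ᵥ y + 2 * (g ⬝ᵥ y) + c := by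
  let ofLp : EuclideanSpace ℝ ι →ₗ[ℝ] ι → ℝ := (WithLp.linearEquiv 2 ℝ (ι → ℝ)).toLinearMap
  let q := M.toQuadraticForm'.comp ofLp
  have hq : ∀ y, q y = y ⬝ᵥ M *ᵥ y := fun y => toLinearMap₂'_apply' M y y
  have hconv := ((q.convexOn_univ_of_nonneg fun y => (hq y).symm ▸ hM y).add
    (((dotProductBilin ℝ ℝ g).comp ofLp).convexOn convex_univ |>.smul zero_le_two)).add_const c
  refine hconv.congr fun y _ => ?_
  simp [hq, ofLp]

theorem convex_underestimator_general {n : ℕ} (Q : Matrix (Fin n) (Fin n) ℝ)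
    (g : EuclideanSpace ℝ (Fin n)) (lamQ : ℝ)
    (hlb : ∀ y : EuclideanSpace ℝ (Fin n), lamQ * ‖y‖ ^ 2 ≤ y ⬝ᵥ Q.mulVec y)
    (hneg : lamQ < 0)
    (h f : EuclideanSpace ℝ (Fin n) → ℝ)
    (hh : ∀ y, h y = y ⬝ᵥ Q.mulVec y + 2 * (g ⬝ᵥ y))
    (hf : ∀ y, f y = y ⬝ᵥ (Q - lamQ • (1 : Matrix (Fin n) (Fin n) ℝ)).mulVec y
        + 2 * (g ⬝ᵥ y) + lamQ) :
    ConvexOn ℝ Set.univ f ∧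
      ∀ y : EuclideanSpace ℝ (Fin n), ‖y‖ ≤ 1 →
        f y ≤ h y ∧ (f y = h y ↔ ‖y‖ = 1) := by
  have hshift : ∀ y : EuclideanSpace ℝ (Fin n),
      y ⬝ᵥ (Q - lamQ • 1) *ᵥ y = y ⬝ᵥ Q *ᵥ y - lamQ * ‖y‖ ^ 2 := fun y => by
    rw [dotProduct_sub_smul_one_mulVec, EuclideanSpace.dotProduct_self_eq_norm_sq]
  have hgap : ∀ y, f y = h y + lamQ * (1 - ‖y‖ ^ 2) := fun y => by
    rw [hf, hh, hshift]
    ring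
  refine ⟨?_, fun y hy => ?_⟩
  · have hpsd : ∀ y : EuclideanSpace ℝ (Fin n), 0 ≤ y ⬝ᵥ (Q - lamQ • 1) *ᵥ y := fun y => by
      linarith [hshift y, hlb y]
    exact (EuclideanSpace.convexOn_dotProduct_mulVec_add_affine _ hpsd g lamQ).congr
      fun y _ => (hf y).symm
  · have hy0 : 0 ≤ ‖y‖ := norm_nonneg y
    refine ⟨by rw [hgap]; nlinarith [mul_le_one₀ hy hy0 hy], ?_⟩
    rw [hgap, add_eq_left, mul_eq_zero, or_iff_right hneg.ne, sub_eq_zero, eq_comm,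
      pow_eq_one_iff_of_nonneg hy0 two_ne_zero]

theorem convex_underestimator {n : ℕ} (Q : Matrix (Fin n) (Fin n) ℝ)
    (g : EuclideanSpace ℝ (Fin n)) (lamQ : ℝ)
    (hQ : Q.IsSymm)
    (hlb : ∀ y : EuclideanSpace ℝ (Fin n), lamQ * ‖y‖ ^ 2 ≤ y ⬝ᵥ Q.mulVec y)
    (hev : ∃ v : EuclideanSpace ℝ (Fin n), v ≠ 0 ∧ Q.mulVec v = lamQ • (v : Fin n → ℝ))
    (hneg : lamQ < 0)
    (h f : EuclideanSpace ℝ (Fin n) → ℝ)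
    (hh : ∀ y, h y = y ⬝ᵥ Q.mulVec y + 2 * (g ⬝ᵥ y))
    (hf : ∀ y, f y = y ⬝ᵥ (Q - lamQ • (1 : Matrix (Fin n) (Fin n) ℝ)).mulVec y
        + 2 * (g ⬝ᵥ y) + lamQ) :
    ConvexOn ℝ Set.univ f ∧
      ∀ y : EuclideanSpace ℝ (Fin n), ‖y‖ ≤ 1 →
        f y ≤ h y ∧ (f y = h y ↔ ‖y‖ = 1) :=
  convex_underestimator_general Q g lamQ hlb hneg h f hh hf
end

section
/- Let Q be symmetric, A ∈ ℝ^{m×n}, and suppose dim(Null(Q − λ_Q I)) ≥ n − dim(Null(A)) + 1. Then there exists a nonzero d with Qd = λ_Q d, Ad = 0, and gᵀd ≤ 0 (replacing d by −d if necessary). In particular, the dimensionality condition of Jeyakumar–Li implies Condition 1. -/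
open Matrix

theorem jeyakumar_li_implies_condition {n m : ℕ} (Q : Matrix (Fin n) (Fin n) ℝ)
    (g : Fin n → ℝ) (lamQ : ℝ) (A : Matrix (Fin m) (Fin n) ℝ)
    (hQ : Q.IsSymm)
    (hdim : Module.finrank ℝ
        (LinearMap.ker (Q - lamQ • (1 : Matrix (Fin n) (Fin n) ℝ)).mulVecLin) ≥
      n - Module.finrank ℝ (LinearMap.ker A.mulVecLin) + 1) :
    ∃ d : Fin n → ℝ, d ≠ 0 ∧ Q.mulVec d = lamQ • d ∧ A.mulVec d = 0 ∧ g ⬝ᵥ d ≤ 0 := by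
  set U := LinearMap.ker (Q - lamQ • (1 : Matrix (Fin n) (Fin n) ℝ)).mulVecLin
  set V := LinearMap.ker A.mulVecLin
  have hV_le : Module.finrank ℝ V ≤ n := by
    simpa using Submodule.finrank_le V
  have hsup : Module.finrank ℝ (U ⊔ V : Submodule ℝ (Fin n → ℝ)) ≤ n := by
    simpa using Submodule.finrank_le (U ⊔ V)
  have hsum := Submodule.finrank_sup_add_finrank_inf_eq U V
  have hinf : 0 < Module.finrank ℝ (U ⊓ V : Submodule ℝ (Fin n → ℝ)) := by omega
  obtain ⟨⟨d, hd⟩, hdne⟩ := Module.finrank_pos_iff_exists_ne_zero.mp hinf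
  have hdU : d ∈ U := hd.1
  have hdV : d ∈ V := hd.2
  have hd0 : d ≠ 0 := by
    intro h; apply hdne; ext; simp [h]
  have hQd : Q.mulVec d = lamQ • d := by
    have := hdU
    simp only [U, LinearMap.mem_ker, mulVecLin_apply, sub_mulVec, smul_mulVec,
      one_mulVec, sub_eq_zero] at this
    exact this
  have hAd : A.mulVec d = 0 := by
    simpa [V, mulVecLin_apply] using hdV
  rcases le_or_gt (g ⬝ᵥ d) 0 with h | h
  · exact ⟨d, hd0, hQd, hAd, h⟩
  · refine ⟨-d, neg_ne_zero.mpr hd0, ?_, ?_, ?_⟩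
    · rw [mulVec_neg, hQd, smul_neg]
    · rw [mulVec_neg, hAd, neg_zero]
    · rw [dotProduct_neg]; linarith
end

section
/- Condition 1 (∃ d ≠ 0 with (Q − λ_Q I)d = 0, Ad ∈ 𝒦, gᵀd ≤ 0) holds if and only if the conic program min_d { gᵀd : (Q − λ_Q I)d = 0, Ad ∈ 𝒦 } is either unbounded below or has more than one optimal solution. -/
open Matrix

theorem condition_iff_unbounded_or_multiple_optima {n m : ℕ}
    (Q : Matrix (Fin n) (Fin n) ℝ) (g : Fin n → ℝ) (lamQ : ℝ)
    (A : Matrix (Fin m) (Fin n) ℝ) (K : Set (Fin m → ℝ))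
    (hQ : Q.IsSymm)
    (hKclosed : IsClosed K) (hKconv : Convex ℝ K)
    (hKcone : ∀ x ∈ K, ∀ c : ℝ, 0 ≤ c → c • x ∈ K)
    (D : Set (Fin n → ℝ))
    (hD : D = {d : Fin n → ℝ |
      (Q - lamQ • (1 : Matrix (Fin n) (Fin n) ℝ)).mulVec d = 0 ∧ A.mulVec d ∈ K}) :
    (∃ d : Fin n → ℝ, d ≠ 0 ∧
        (Q - lamQ • (1 : Matrix (Fin n) (Fin n) ℝ)).mulVec d = 0 ∧
        A.mulVec d ∈ K ∧ g ⬝ᵥ d ≤ 0) ↔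
      ((∀ M : ℝ, ∃ d ∈ D, g ⬝ᵥ d < M) ∨
        ∃ d₁ ∈ D, ∃ d₂ ∈ D, d₁ ≠ d₂ ∧
          (∀ d ∈ D, g ⬝ᵥ d₁ ≤ g ⬝ᵥ d) ∧ (∀ d ∈ D, g ⬝ᵥ d₂ ≤ g ⬝ᵥ d)) := by
  subst hD
  -- D is closed under nonnegative scaling
  have hscale : ∀ d : Fin n → ℝ,
      d ∈ {d : Fin n → ℝ |
        (Q - lamQ • (1 : Matrix (Fin n) (Fin n) ℝ)).mulVec d = 0 ∧ A.mulVec d ∈ K} →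
      ∀ c : ℝ, 0 ≤ c → (c • d) ∈ {d : Fin n → ℝ |
        (Q - lamQ • (1 : Matrix (Fin n) (Fin n) ℝ)).mulVec d = 0 ∧ A.mulVec d ∈ K} := by
    rintro d ⟨h1, h2⟩ c hc
    refine ⟨?_, ?_⟩
    · rw [Matrix.mulVec_smul, h1, smul_zero]
    · rw [Matrix.mulVec_smul]
      exact hKcone _ h2 c hc
  -- if D contains a direction of negative cost, the problem is unbounded
  have unb : ∀ d : Fin n → ℝ,
      d ∈ {d : Fin n → ℝ |
        (Q - lamQ • (1 : Matrix (Fin n) (Fin n) ℝ)).mulVec d = 0 ∧ A.mulVec d ∈ K} →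
      g ⬝ᵥ d < 0 → ∀ M : ℝ, ∃ d' ∈ {d : Fin n → ℝ |
        (Q - lamQ • (1 : Matrix (Fin n) (Fin n) ℝ)).mulVec d = 0 ∧ A.mulVec d ∈ K},
        g ⬝ᵥ d' < M := by
    intro d hd hneg M
    set c : ℝ := max 0 ((M - 1) / (g ⬝ᵥ d)) with hc
    have hc0 : 0 ≤ c := le_max_left _ _
    refine ⟨c • d, hscale d hd c hc0, ?_⟩
    rw [dotProduct_smul]
    have h1 : c * (g ⬝ᵥ d) ≤ ((M - 1) / (g ⬝ᵥ d)) * (g ⬝ᵥ d) :=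
      mul_le_mul_of_nonpos_right (le_max_right _ _) hneg.le
    have h2 : ((M - 1) / (g ⬝ᵥ d)) * (g ⬝ᵥ d) = M - 1 :=
      div_mul_cancel₀ _ hneg.ne
    calc c • (g ⬝ᵥ d) = c * (g ⬝ᵥ d) := rfl
      _ ≤ M - 1 := h2 ▸ h1
      _ < M := by linarith
  constructor
  · rintro ⟨d, hd0, hQd, hAd, hgd⟩
    have hdD : d ∈ {d : Fin n → ℝ |
        (Q - lamQ • (1 : Matrix (Fin n) (Fin n) ℝ)).mulVec d = 0 ∧ A.mulVec d ∈ K} :=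
      ⟨hQd, hAd⟩
    rcases hgd.lt_or_eq with hlt | heq
    · exact Or.inl (unb d hdD hlt)
    · by_cases hex : ∃ d' ∈ {d : Fin n → ℝ |
        (Q - lamQ • (1 : Matrix (Fin n) (Fin n) ℝ)).mulVec d = 0 ∧ A.mulVec d ∈ K},
        g ⬝ᵥ d' < 0
      · obtain ⟨d', hd', hlt'⟩ := hex
        exact Or.inl (unb d' hd' hlt')
      · push_neg at hex
        have h0D : (0 : Fin n → ℝ) ∈ {d : Fin n → ℝ |
            (Q - lamQ • (1 : Matrix (Fin n) (Fin n) ℝ)).mulVec d = 0 ∧ A.mulVec d ∈ K} := by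
          have := hscale d hdD 0 le_rfl
          simpa using this
        refine Or.inr ⟨d, hdD, 0, h0D, hd0, ?_, ?_⟩
        · intro d' hd'
          rw [heq]
          exact hex d' hd'
        · intro d' hd'
          rw [dotProduct_zero]
          exact hex d' hd'
  · rintro (hunb | ⟨d₁, hd₁, d₂, hd₂, hne, hopt₁, hopt₂⟩)
    · obtain ⟨d, hd, hlt⟩ := hunb 0
      refine ⟨d, ?_, hd.1, hd.2, hlt.le⟩
      rintro rfl
      simp at hlt
    · have h0D : (0 : Fin n → ℝ) ∈ {d : Fin n → ℝ |
          (Q - lamQ • (1 : Matrix (Fin n) (Fin n) ℝ)).mulVec d = 0 ∧ A.mulVec d ∈ K} := by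
        have := hscale d₁ hd₁ 0 le_rfl
        simpa using this
      by_cases h1 : d₁ = 0
      · have h2 : d₂ ≠ 0 := fun h => hne (h1.trans h.symm)
        refine ⟨d₂, h2, hd₂.1, hd₂.2, ?_⟩
        have := hopt₂ 0 h0D
        simpa using this
      · refine ⟨d₁, h1, hd₁.1, hd₁.2, ?_⟩
        have := hopt₁ 0 h0D
        simpa using this
end

section
/- Let λ_Q < 0 and s = 1/(1 − λ_Q) ∈ (0,1). Then the set ℱ_s ∩ {x : x_{n+1} > 0}, where ℱ_s = {x = (y, x_{n+1}, x_{n+2}) : yᵀ(Q − λ_Q I)y + 2gᵀy·x_{n+1} + λ_Q x_{n+1}² ≤ x_{n+1} x_{n+2}}, is a convex set; moreover every x in this set satisfies x_{n+2} − 2gᵀy − λ_Q x_{n+1} ≥ 0. -/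
/-!
With `A = Q - λ_Q I` positive semidefinite, the defining inequality reads
`yᵀAy ≤ x_{n+1} (x_{n+2} - 2gᵀy - λ_Q x_{n+1})`, so the set is the preimage of the rotated cone
`{(y, t, w) | yᵀAy ≤ t w, 0 < t}` under a linear map. The cone is convex: for two of its points
`(y, t, u)`, `(z, s, v)`, nonnegativity of `A` at `s y - t z` bounds the cross term `2 yᵀAz` by
`s u + t v`. On the cone, `0 ≤ yᵀAy ≤ t w` with `t > 0` forces `w ≥ 0`.
-/

open Matrix

namespace QuadraticMap

variable {E : Type*} [AddCommGroup E] [Module ℝ E]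

def rotatedCone (Q : QuadraticMap ℝ E ℝ) : Set (E × ℝ × ℝ) :=
  {x | Q x.1 ≤ x.2.1 * x.2.2 ∧ 0 < x.2.1}

theorem map_smul_add_smul (Q : QuadraticMap ℝ E ℝ) (a b : ℝ) (y z : E) :
    Q (a • y + b • z) = a ^ 2 * Q y + a * b * polar Q y z + b ^ 2 * Q z := by
  rw [QuadraticMap.map_add Q, Q.map_smul, Q.map_smul, polar_smul_left, polar_smul_right]
  simp only [smul_eq_mul]
  ring

theorem polar_le_of_le_mul {Q : QuadraticMap ℝ E ℝ} (hQ : ∀ x, 0 ≤ Q x) {y z : E}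
    {t u s v : ℝ} (hy : Q y ≤ t * u) (hz : Q z ≤ s * v) (ht : 0 < t) (hs : 0 < s) :
    polar Q y z ≤ s * u + t * v := by
  have key : 0 ≤ Q (s • y + (-t) • z) := hQ _
  rw [map_smul_add_smul] at key
  have hst : 0 < s * t := mul_pos hs ht
  refine le_of_mul_le_mul_left ?_ hst
  nlinarith [mul_le_mul_of_nonneg_left hy (sq_nonneg s), mul_le_mul_of_nonneg_left hz (sq_nonneg t)]

theorem convex_rotatedCone {Q : QuadraticMap ℝ E ℝ} (hQ : ∀ x, 0 ≤ Q x) :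
    Convex ℝ Q.rotatedCone := by
  rintro ⟨y, t, u⟩ ⟨hy, ht⟩ ⟨z, s, v⟩ ⟨hz, hs⟩ a b ha hb hab
  refine ⟨?_, convex_Ioi (0 : ℝ) ht hs ha hb hab⟩
  have hpolar := polar_le_of_le_mul hQ hy hz ht hs
  simp only [Prod.smul_mk, Prod.mk_add_mk, smul_eq_mul, map_smul_add_smul]
  nlinarith [mul_le_mul_of_nonneg_left hpolar (mul_nonneg ha hb),
    mul_le_mul_of_nonneg_left hy (sq_nonneg a), mul_le_mul_of_nonneg_left hz (sq_nonneg b)]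

theorem nonneg_of_mem_rotatedCone {Q : QuadraticMap ℝ E ℝ} (hQ : ∀ x, 0 ≤ Q x) {x : E × ℝ × ℝ}
    (hx : x ∈ Q.rotatedCone) : 0 ≤ x.2.2 :=
  nonneg_of_mul_nonneg_right ((hQ x.1).trans hx.1) hx.2

end QuadraticMap

theorem Matrix.toQuadraticForm'_sub_smul_one_nonneg {ι : Type*} [Fintype ι] [DecidableEq ι]
    {Q : Matrix ι ι ℝ} {lam : ℝ}
    (hlb : ∀ y : EuclideanSpace ℝ ι, lam * ‖y‖ ^ 2 ≤ y ⬝ᵥ Q *ᵥ y) (v : ι → ℝ) :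
    0 ≤ (Q - lam • 1).toQuadraticForm' v := by
  have hv := hlb (WithLp.toLp 2 v)
  rw [← real_inner_self_eq_norm_sq, EuclideanSpace.inner_eq_star_dotProduct] at hv
  simp only [Matrix.toQuadraticForm', LinearMap.BilinMap.toQuadraticMap_apply, toLinearMap₂'_apply',
    sub_mulVec, smul_mulVec, one_mulVec, dotProduct_sub, dotProduct_smul, smul_eq_mul]
  simp only [star_trivial] at hv
  linarith

theorem Fs_cap_positive_convex_general {n : ℕ} (Q : Matrix (Fin n) (Fin n) ℝ)
    (g : EuclideanSpace ℝ (Fin n)) (lamQ : ℝ)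
    (hlb : ∀ y : EuclideanSpace ℝ (Fin n), lamQ * ‖y‖ ^ 2 ≤ y ⬝ᵥ Q.mulVec y)
    (S : Set (EuclideanSpace ℝ (Fin n) × ℝ × ℝ))
    (hS : S = {x : EuclideanSpace ℝ (Fin n) × ℝ × ℝ |
      x.1 ⬝ᵥ (Q - lamQ • (1 : Matrix (Fin n) (Fin n) ℝ)).mulVec x.1
          + 2 * (g ⬝ᵥ x.1) * x.2.1 + lamQ * x.2.1 ^ 2 ≤ x.2.1 * x.2.2 ∧
        0 < x.2.1}) :
    Convex ℝ S ∧ ∀ x ∈ S, 0 ≤ x.2.2 - 2 * (g ⬝ᵥ x.1) - lamQ * x.2.1 := by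
  let φ : EuclideanSpace ℝ (Fin n) × ℝ × ℝ →ₗ[ℝ] (Fin n → ℝ) × ℝ × ℝ :=
    { toFun := fun x => (x.1, x.2.1, x.2.2 - 2 * (g ⬝ᵥ x.1) - lamQ * x.2.1)
      map_add' := fun x z => by ext <;> simp [dotProduct_add]; ring
      map_smul' := fun a x => by ext <;> simp [dotProduct_smul]; ring }
  have hφ : S = φ ⁻¹' (Q - lamQ • 1).toQuadraticForm'.rotatedCone := by
    ext x
    simp only [hS, Set.mem_ofPred_eq, Set.mem_preimage, QuadraticMap.rotatedCone, φ,
      LinearMap.coe_mk, AddHom.coe_mk, Matrix.toQuadraticForm',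
      LinearMap.BilinMap.toQuadraticMap_apply, toLinearMap₂'_apply']
    constructor <;> rintro ⟨hle, hpos⟩ <;> exact ⟨by linarith, hpos⟩
  have hA := Matrix.toQuadraticForm'_sub_smul_one_nonneg hlb
  refine ⟨hφ ▸ (QuadraticMap.convex_rotatedCone hA).linear_preimage φ, fun x hx => ?_⟩
  rw [hφ] at hx
  exact QuadraticMap.nonneg_of_mem_rotatedCone hA hx

theorem Fs_cap_positive_convex {n : ℕ} (Q : Matrix (Fin n) (Fin n) ℝ)
    (g : EuclideanSpace ℝ (Fin n)) (lamQ : ℝ)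
    (hQ : Q.IsSymm)
    (hlb : ∀ y : EuclideanSpace ℝ (Fin n), lamQ * ‖y‖ ^ 2 ≤ y ⬝ᵥ Q.mulVec y)
    (hev : ∃ v : EuclideanSpace ℝ (Fin n), v ≠ 0 ∧ Q.mulVec v = lamQ • (v : Fin n → ℝ))
    (hneg : lamQ < 0)
    (S : Set (EuclideanSpace ℝ (Fin n) × ℝ × ℝ))
    (hS : S = {x : EuclideanSpace ℝ (Fin n) × ℝ × ℝ |
      x.1 ⬝ᵥ (Q - lamQ • (1 : Matrix (Fin n) (Fin n) ℝ)).mulVec x.1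
          + 2 * (g ⬝ᵥ x.1) * x.2.1 + lamQ * x.2.1 ^ 2 ≤ x.2.1 * x.2.2 ∧
        0 < x.2.1}) :
    Convex ℝ S ∧ ∀ x ∈ S, 0 ≤ x.2.2 - 2 * (g ⬝ᵥ x.1) - lamQ * x.2.1 :=
  Fs_cap_positive_convex_general Q g lamQ hlb S hS
end

section
/- Assume λ_Q < 0 and Condition 7 holds. Let X = {(y,t) : ‖y‖ ≤ 1, Ay − b ∈ 𝒦, yᵀQy + 2gᵀy ≤ t}. Then every extreme point (y,t) of conv(X) satisfies ‖y‖ = 1. -/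
open Matrix

/-! If `‖y‖ < 1` at a point `(y, t)` of `X`, move along the direction `d` of Condition 7.
Since `±A d ∈ 𝒦`, the line through `A y - b` in direction `A d` stays in the convex cone `𝒦`;
for small `|ε|` the point `y + ε d` stays in the unit ball; and since `dᵀ Q d = λ_Q ‖d‖² ≤ 0`,
the objective along the line lies below its tangent `f(y) + ε c`. So `(y ± ε d, t ± ε c) ∈ X`,
and `(y, t)`, their midpoint, is not extreme. -/

section OrderedField

variable {𝕜 E : Type*} [Field 𝕜] [LinearOrder 𝕜] [IsStrictOrderedRing 𝕜] [AddCommGroup E]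
  [Module 𝕜 E]

theorem Convex.add_mem_of_smul_mem {K : Set E} (hconv : Convex 𝕜 K)
    (hcone : ∀ x ∈ K, ∀ c : 𝕜, 0 ≤ c → c • x ∈ K) {x y : E} (hx : x ∈ K) (hy : y ∈ K) :
    x + y ∈ K := by
  have hhalf : (0 : 𝕜) ≤ 2⁻¹ := by positivity
  have hmid := hcone _ (hconv hx hy hhalf hhalf (by norm_num)) 2 zero_le_two
  rwa [smul_add, smul_smul, smul_smul, mul_inv_cancel₀ two_ne_zero, one_smul, one_smul] at hmid

theorem Convex.add_smul_mem_of_neg_mem {K : Set E} (hconv : Convex 𝕜 K)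
    (hcone : ∀ x ∈ K, ∀ c : 𝕜, 0 ≤ c → c • x ∈ K) {x w : E} (hx : x ∈ K) (hw : w ∈ K)
    (hw' : -w ∈ K) (ε : 𝕜) : x + ε • w ∈ K := by
  refine hconv.add_mem_of_smul_mem hcone hx ?_
  rcases le_total 0 ε with hε | hε
  · exact hcone w hw ε hε
  · simpa using hcone (-w) hw' (-ε) (neg_nonneg.2 hε)

theorem eq_zero_of_mem_extremePoints_of_add_mem_of_sub_mem {A : Set E} {x v : E}
    (hx : x ∈ A.extremePoints 𝕜) (hadd : x + v ∈ A) (hsub : x - v ∈ A) : v = 0 :=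
  add_eq_left.1 (hx.2 hadd hsub (mem_openSegment_add_sub x v))

end OrderedField

theorem Matrix.dotProduct_mulVec_add_smul_le {ι : Type*} [Fintype ι] (Q : Matrix ι ι ℝ)
    (g y d : ι → ℝ) (hd : d ⬝ᵥ Q *ᵥ d ≤ 0) (ε : ℝ) :
    (y + ε • d) ⬝ᵥ Q *ᵥ (y + ε • d) + 2 * (g ⬝ᵥ (y + ε • d)) ≤
      y ⬝ᵥ Q *ᵥ y + 2 * (g ⬝ᵥ y) + ε * (y ⬝ᵥ Q *ᵥ d + d ⬝ᵥ Q *ᵥ y + 2 * (g ⬝ᵥ d)) := by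
  simp only [mulVec_add, mulVec_smul, dotProduct_add, add_dotProduct, dotProduct_smul,
    smul_dotProduct, smul_eq_mul]
  nlinarith [mul_nonpos_of_nonneg_of_nonpos (sq_nonneg ε) hd]

theorem exists_pos_forall_abs_le_norm_add_smul_le {E : Type*} [SeminormedAddCommGroup E]
    [NormedSpace ℝ E] {y : E} {r : ℝ} (hy : ‖y‖ < r) (d : E) :
    ∃ s > 0, ∀ ε : ℝ, |ε| ≤ s → ‖y + ε • d‖ ≤ r := by
  -- the `+ 1` keeps the denominator positive also when `d = 0`
  refine ⟨(r - ‖y‖) / (‖d‖ + 1), by positivity, fun ε hε => ?_⟩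
  have hs : (r - ‖y‖) / (‖d‖ + 1) * ‖d‖ ≤ r - ‖y‖ := by
    rw [div_mul_eq_mul_div, div_le_iff₀ (by positivity)]
    nlinarith [norm_nonneg d]
  calc ‖y + ε • d‖ ≤ ‖y‖ + |ε| * ‖d‖ := by
        simpa [norm_smul] using norm_add_le y (ε • d)
    _ ≤ ‖y‖ + (r - ‖y‖) / (‖d‖ + 1) * ‖d‖ := by gcongr
    _ ≤ r := by linarith

theorem extreme_points_unit_norm_general {n m : ℕ} (Q : Matrix (Fin n) (Fin n) ℝ)
    (g : EuclideanSpace ℝ (Fin n)) (lamQ : ℝ)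
    (A : Matrix (Fin m) (Fin n) ℝ) (b : Fin m → ℝ) (K : Set (Fin m → ℝ))
    (hneg : lamQ < 0)
    (hKconv : Convex ℝ K)
    (hKcone : ∀ x ∈ K, ∀ c : ℝ, 0 ≤ c → c • x ∈ K)
    (hcond7 : ∃ d : EuclideanSpace ℝ (Fin n), d ≠ 0 ∧
      Q.mulVec d = lamQ • (d : Fin n → ℝ) ∧ A.mulVec d ∈ K ∧ -A.mulVec d ∈ K)
    (X : Set (EuclideanSpace ℝ (Fin n) × ℝ))
    (hX : X = {p : EuclideanSpace ℝ (Fin n) × ℝ | ‖p.1‖ ≤ 1 ∧ A.mulVec p.1 - b ∈ K ∧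
      p.1 ⬝ᵥ Q.mulVec p.1 + 2 * (g ⬝ᵥ p.1) ≤ p.2}) :
    ∀ p ∈ Set.extremePoints ℝ (convexHull ℝ X), ‖p.1‖ = 1 := by
  rintro ⟨y, t⟩ hp
  obtain ⟨d, hd0, hQd, hAd, hAd'⟩ := hcond7
  have hyX : (y, t) ∈ X := extremePoints_convexHull_subset hp
  rw [hX] at hyX
  obtain ⟨hy1, hyK, hyq⟩ := hyX
  by_contra hne
  obtain ⟨s, hs0, hs⟩ := exists_pos_forall_abs_le_norm_add_smul_le (hy1.lt_of_ne hne) d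
  have hdQd : d ⬝ᵥ Q *ᵥ d ≤ 0 := by
    rw [hQd, dotProduct_smul, smul_eq_mul]
    exact mul_nonpos_of_nonpos_of_nonneg hneg.le (dotProduct_star_self_nonneg _)
  set c := y ⬝ᵥ Q *ᵥ d + d ⬝ᵥ Q *ᵥ y + 2 * (g ⬝ᵥ d)
  have hmem : ∀ ε : ℝ, |ε| ≤ s → (y + ε • d, t + ε * c) ∈ convexHull ℝ X := by
    refine fun ε hε => subset_convexHull ℝ X ?_
    rw [hX]
    refine ⟨hs ε hε, ?_, ?_⟩
    · rw [WithLp.ofLp_add, WithLp.ofLp_smul, mulVec_add, mulVec_smul, add_sub_right_comm]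
      exact hKconv.add_smul_mem_of_neg_mem hKcone hyK hAd hAd' ε
    · dsimp only at hyq ⊢
      exact (Q.dotProduct_mulVec_add_smul_le g y d hdQd ε).trans (by linarith)
  have hsd : ((s • d, s * c) : EuclideanSpace ℝ (Fin n) × ℝ) = 0 :=
    eq_zero_of_mem_extremePoints_of_add_mem_of_sub_mem hp (hmem s (abs_of_pos hs0).le)
      (by simpa [sub_eq_add_neg] using hmem (-s) (by rw [abs_neg, abs_of_pos hs0]))
  exact hd0 ((smul_eq_zero.1 (congrArg Prod.fst hsd)).resolve_left hs0.ne')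

theorem extreme_points_unit_norm {n m : ℕ} (Q : Matrix (Fin n) (Fin n) ℝ)
    (g : EuclideanSpace ℝ (Fin n)) (lamQ : ℝ)
    (A : Matrix (Fin m) (Fin n) ℝ) (b : Fin m → ℝ) (K : Set (Fin m → ℝ))
    (hQ : Q.IsSymm)
    (hlb : ∀ y : EuclideanSpace ℝ (Fin n), lamQ * ‖y‖ ^ 2 ≤ y ⬝ᵥ Q.mulVec y)
    (hev : ∃ v : EuclideanSpace ℝ (Fin n), v ≠ 0 ∧ Q.mulVec v = lamQ • (v : Fin n → ℝ))
    (hneg : lamQ < 0)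
    (hKclosed : IsClosed K) (hKconv : Convex ℝ K)
    (hKcone : ∀ x ∈ K, ∀ c : ℝ, 0 ≤ c → c • x ∈ K)
    (hcond7 : ∃ d : EuclideanSpace ℝ (Fin n), d ≠ 0 ∧
      Q.mulVec d = lamQ • (d : Fin n → ℝ) ∧ A.mulVec d ∈ K ∧ -A.mulVec d ∈ K)
    (X : Set (EuclideanSpace ℝ (Fin n) × ℝ))
    (hX : X = {p : EuclideanSpace ℝ (Fin n) × ℝ | ‖p.1‖ ≤ 1 ∧ A.mulVec p.1 - b ∈ K ∧
      p.1 ⬝ᵥ Q.mulVec p.1 + 2 * (g ⬝ᵥ p.1) ≤ p.2}) :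
    ∀ p ∈ Set.extremePoints ℝ (convexHull ℝ X), ‖p.1‖ = 1 :=
  extreme_points_unit_norm_general Q g lamQ A b K hneg hKconv hKcone hcond7 X hX
end

section
/- Assume λ_Q < 0, Condition 7 holds, and 𝒫 ⊆ {y : ‖y‖ < 1, Ay − b ∈ 𝒦}. Let ℛ = ℝⁿ \ 𝒫, X = {(y,t) : ‖y‖ ≤ 1, Ay − b ∈ 𝒦, yᵀQy + 2gᵀy ≤ t} and X_ℛ = {(y,t) ∈ X : y ∈ ℛ}. Then conv(X_ℛ) = conv(X). -/
/-!
Over a point `y ∈ 𝒫`, move along the eigenvector `d` of Condition 7. Since `±A d ∈ 𝒦`, the conic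
constraint holds on the whole line `y + ℝ d`, and since `dᵀ Q d = λ_Q ‖d‖² < 0` the objective is a
concave quadratic along it. The line leaves the unit ball at two points on either side of `y`;
they lie outside `𝒫`, and by concavity every epigraph point over `y` is a convex combination of
epigraph points over them.
-/

open Matrix Set

theorem add_smul_mem_of_mem_of_neg_mem {E : Type*} [AddCommGroup E] [Module ℝ E] {K : Set E}
    (hconv : Convex ℝ K) (hcone : ∀ x ∈ K, ∀ c : ℝ, 0 ≤ c → c • x ∈ K) {x w : E}
    (hx : x ∈ K) (hw : w ∈ K) (hw' : -w ∈ K) (r : ℝ) : x + r • w ∈ K := by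
  have hrw : (2 * r) • w ∈ K := by
    rcases le_total 0 r with hr | hr
    · exact hcone w hw _ (by linarith)
    · simpa using hcone (-w) hw' (-(2 * r)) (by linarith)
  rw [show x + r • w = (1 / 2 : ℝ) • (2 : ℝ) • x + (1 / 2 : ℝ) • (2 * r) • w by module]
  exact hconv (hcone x hx 2 zero_le_two) hrw (by norm_num) (by norm_num) (by norm_num)

theorem exists_pos_norm_add_smul_eq {E : Type*} [NormedAddCommGroup E] [NormedSpace ℝ E]
    {y d : E} {r : ℝ} (hy : ‖y‖ < r) (hd : d ≠ 0) : ∃ s : ℝ, 0 < s ∧ ‖y + s • d‖ = r := by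
  set R := (r + ‖y‖) / ‖d‖
  have hR : 0 ≤ R := div_nonneg (by linarith [norm_nonneg y]) (norm_nonneg d)
  have hfar : r ≤ ‖y + R • d‖ := by
    have hRd : ‖R • d‖ = r + ‖y‖ := by
      rw [norm_smul, Real.norm_of_nonneg hR, div_mul_cancel₀ _ (norm_ne_zero_iff.mpr hd)]
    have htri := norm_sub_le (y + R • d) y
    rw [add_sub_cancel_left] at htri
    linarith
  obtain ⟨s, hs, hsr⟩ := intermediate_value_Icc hR
    (by fun_prop : Continuous fun s : ℝ => ‖y + s • d‖).continuousOn
    ⟨by simpa using hy.le, hfar⟩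
  refine ⟨s, hs.1.lt_of_ne ?_, hsr⟩
  rintro rfl
  simp only [zero_smul, add_zero] at hsr
  exact hy.ne hsr

theorem concaveOn_univ_quadratic {a b c : ℝ} (hc : c ≤ 0) :
    ConcaveOn ℝ univ fun s : ℝ => a + b * s + c * s ^ 2 := by
  refine ⟨convex_univ, fun x _ y _ μ ν hμ hν hμν => ?_⟩
  obtain rfl : ν = 1 - μ := by linarith
  simp only [smul_eq_mul]
  nlinarith [mul_nonneg (mul_nonneg hμ hν) (sq_nonneg (x - y))]

theorem quadratic_add_smul {ι : Type*} [Fintype ι] (Q : Matrix ι ι ℝ) (g y d : ι → ℝ) (s : ℝ) :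
    (y + s • d) ⬝ᵥ Q *ᵥ (y + s • d) + 2 * (g ⬝ᵥ (y + s • d)) =
      (y ⬝ᵥ Q *ᵥ y + 2 * (g ⬝ᵥ y)) + (y ⬝ᵥ Q *ᵥ d + d ⬝ᵥ Q *ᵥ y + 2 * (g ⬝ᵥ d)) * s
        + (d ⬝ᵥ Q *ᵥ d) * s ^ 2 := by
  simp only [mulVec_add, mulVec_smul, dotProduct_add, add_dotProduct, dotProduct_smul,
    smul_dotProduct, smul_eq_mul]
  ring

theorem convexHull_epigraph_sep_notMem_eq {E : Type*} [AddCommGroup E] [Module ℝ E]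
    {S P : Set E} {f : E → ℝ}
    (hsplit : ∀ y ∈ S ∩ P, ∃ u ∈ S \ P, ∃ v ∈ S \ P, ∃ a b : ℝ, 0 ≤ a ∧ 0 ≤ b ∧ a + b = 1 ∧
      a • u + b • v = y ∧ a * f u + b * f v ≤ f y) :
    convexHull ℝ {p ∈ {p : E × ℝ | p.1 ∈ S ∧ f p.1 ≤ p.2} | p.1 ∉ P} =
      convexHull ℝ {p : E × ℝ | p.1 ∈ S ∧ f p.1 ≤ p.2} := by
  set X := {p : E × ℝ | p.1 ∈ S ∧ f p.1 ≤ p.2}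
  refine (convexHull_mono (sep_subset _ _)).antisymm (convexHull_min ?_ (convex_convexHull ℝ _))
  rintro ⟨y, t⟩ ⟨hyS, hyt⟩
  by_cases hyP : y ∈ P
  swap
  · exact subset_convexHull ℝ _ ⟨⟨hyS, hyt⟩, hyP⟩
  obtain ⟨u, ⟨huS, huP⟩, v, ⟨hvS, hvP⟩, a, b, ha, hb, hab, rfl, hf⟩ := hsplit _ ⟨hyS, hyP⟩
  -- Both endpoints are lifted by the same slack, which the convex combination returns to `t`.
  set δ := t - (a * f u + b * f v)
  have hδ : 0 ≤ δ := by dsimp only at hyt; linarith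
  have hu : (u, f u + δ) ∈ {p ∈ X | p.1 ∉ P} :=
    ⟨⟨huS, le_add_of_nonneg_right hδ⟩, huP⟩
  have hv : (v, f v + δ) ∈ {p ∈ X | p.1 ∉ P} :=
    ⟨⟨hvS, le_add_of_nonneg_right hδ⟩, hvP⟩
  convert convex_convexHull ℝ _ (subset_convexHull ℝ _ hu) (subset_convexHull ℝ _ hv) ha hb hab
    using 1
  ext
  · rfl
  · simp only [Prod.snd_add, Prod.smul_snd, smul_eq_mul, δ]
    linear_combination (a * f u + b * f v - t) * hab

theorem exists_combo_le_of_concaveOn_line {E : Type*} [AddCommGroup E] [Module ℝ E]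
    {f : E → ℝ} {y d : E} (hf : ConcaveOn ℝ univ fun r : ℝ => f (y + r • d)) {s t : ℝ}
    (hs : s < 0) (ht : 0 < t) :
    ∃ a b : ℝ, 0 ≤ a ∧ 0 ≤ b ∧ a + b = 1 ∧ a • (y + s • d) + b • (y + t • d) = y ∧
      a * f (y + s • d) + b * f (y + t • d) ≤ f y := by
  have hts : 0 < t - s := by linarith
  have hab : t / (t - s) + -s / (t - s) = 1 := by field_simp; ring
  have hcombo : t / (t - s) * s + -s / (t - s) * t = 0 := by field_simp; ring
  refine ⟨t / (t - s), -s / (t - s), by positivity, div_nonneg (by linarith) hts.le, hab, ?_, ?_⟩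
  · rw [smul_add, smul_add, add_add_add_comm, ← add_smul, hab, one_smul, smul_smul, smul_smul,
      ← add_smul, hcombo, zero_smul, add_zero]
  · simpa only [smul_eq_mul, hcombo, zero_smul, add_zero] using
      hf.2 (x := s) (y := t) trivial trivial (by positivity) (div_nonneg (by linarith) hts.le) hab

theorem hollow_constraints_convex_hull_general {n m : ℕ} (Q : Matrix (Fin n) (Fin n) ℝ)
    (g : EuclideanSpace ℝ (Fin n)) (lamQ : ℝ)
    (A : Matrix (Fin m) (Fin n) ℝ) (b : Fin m → ℝ) (K : Set (Fin m → ℝ))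
    (hneg : lamQ < 0)
    (hKconv : Convex ℝ K)
    (hKcone : ∀ x ∈ K, ∀ c : ℝ, 0 ≤ c → c • x ∈ K)
    (hcond7 : ∃ d : EuclideanSpace ℝ (Fin n), d ≠ 0 ∧
      Q.mulVec d = lamQ • (d : Fin n → ℝ) ∧ A.mulVec d ∈ K ∧ -A.mulVec d ∈ K)
    (P : Set (EuclideanSpace ℝ (Fin n)))
    (hP : P ⊆ {y : EuclideanSpace ℝ (Fin n) | ‖y‖ < 1 ∧ A.mulVec y - b ∈ K})
    (X XR : Set (EuclideanSpace ℝ (Fin n) × ℝ))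
    (hX : X = {p : EuclideanSpace ℝ (Fin n) × ℝ | ‖p.1‖ ≤ 1 ∧ A.mulVec p.1 - b ∈ K ∧
      p.1 ⬝ᵥ Q.mulVec p.1 + 2 * (g ⬝ᵥ p.1) ≤ p.2})
    (hXR : XR = {p ∈ X | p.1 ∉ P}) :
    convexHull ℝ XR = convexHull ℝ X := by
  obtain ⟨d, hd0, hQd, hAd, hAd'⟩ := hcond7
  set S := {y : EuclideanSpace ℝ (Fin n) | ‖y‖ ≤ 1 ∧ A *ᵥ y - b ∈ K}
  set f := fun y : EuclideanSpace ℝ (Fin n) => y ⬝ᵥ Q *ᵥ y + 2 * (g ⬝ᵥ y)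
  obtain rfl : X = {p | p.1 ∈ S ∧ f p.1 ≤ p.2} := hX.trans (ext fun _ => and_assoc.symm)
  subst hXR
  refine convexHull_epigraph_sep_notMem_eq fun y ⟨hyS, hyP⟩ => ?_
  have hline : ∀ r : ℝ, A *ᵥ (y + r • d) - b ∈ K := fun r => by
    convert add_smul_mem_of_mem_of_neg_mem hKconv hKcone hyS.2 hAd hAd' r using 1
    simp only [mulVec_add, mulVec_smul]
    abel
  have hsphere : ∀ r : ℝ, ‖y + r • d‖ = 1 → y + r • d ∈ S \ P := fun r hr =>
    ⟨⟨hr.le, hline r⟩, fun h => (hP h).1.ne hr⟩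
  have hdQd : d ⬝ᵥ Q *ᵥ d ≤ 0 := by
    rw [hQd, dotProduct_smul, smul_eq_mul]
    exact mul_nonpos_of_nonpos_of_nonneg hneg.le (dotProduct_self_star_nonneg _)
  have hconc : ConcaveOn ℝ univ fun r : ℝ => f (y + r • d) := by
    simpa only [f, WithLp.ofLp_add, WithLp.ofLp_smul, quadratic_add_smul]
      using concaveOn_univ_quadratic hdQd
  obtain ⟨t, ht, hyt⟩ := exists_pos_norm_add_smul_eq (hP hyP).1 hd0
  obtain ⟨s, hs, hys⟩ := exists_pos_norm_add_smul_eq (hP hyP).1 (neg_ne_zero.mpr hd0)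
  rw [smul_neg, ← neg_smul] at hys
  exact ⟨_, hsphere _ hys, _, hsphere t hyt,
    exists_combo_le_of_concaveOn_line hconc (neg_neg_of_pos hs) ht⟩

theorem hollow_constraints_convex_hull {n m : ℕ} (Q : Matrix (Fin n) (Fin n) ℝ)
    (g : EuclideanSpace ℝ (Fin n)) (lamQ : ℝ)
    (A : Matrix (Fin m) (Fin n) ℝ) (b : Fin m → ℝ) (K : Set (Fin m → ℝ))
    (hQ : Q.IsSymm)
    (hlb : ∀ y : EuclideanSpace ℝ (Fin n), lamQ * ‖y‖ ^ 2 ≤ y ⬝ᵥ Q.mulVec y)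
    (hev : ∃ v : EuclideanSpace ℝ (Fin n), v ≠ 0 ∧ Q.mulVec v = lamQ • (v : Fin n → ℝ))
    (hneg : lamQ < 0)
    (hKclosed : IsClosed K) (hKconv : Convex ℝ K)
    (hKcone : ∀ x ∈ K, ∀ c : ℝ, 0 ≤ c → c • x ∈ K)
    (hcond7 : ∃ d : EuclideanSpace ℝ (Fin n), d ≠ 0 ∧
      Q.mulVec d = lamQ • (d : Fin n → ℝ) ∧ A.mulVec d ∈ K ∧ -A.mulVec d ∈ K)
    (P : Set (EuclideanSpace ℝ (Fin n)))
    (hP : P ⊆ {y : EuclideanSpace ℝ (Fin n) | ‖y‖ < 1 ∧ A.mulVec y - b ∈ K})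
    (X XR : Set (EuclideanSpace ℝ (Fin n) × ℝ))
    (hX : X = {p : EuclideanSpace ℝ (Fin n) × ℝ | ‖p.1‖ ≤ 1 ∧ A.mulVec p.1 - b ∈ K ∧
      p.1 ⬝ᵥ Q.mulVec p.1 + 2 * (g ⬝ᵥ p.1) ≤ p.2})
    (hXR : XR = {p ∈ X | p.1 ∉ P}) :
    convexHull ℝ XR = convexHull ℝ X :=
  hollow_constraints_convex_hull_general Q g lamQ A b K hneg hKconv hKcone hcond7 P hP X XR hX hXR
end

section
/- Let Q be symmetric with λ_Q < 0 and 0 ≤ l ≤ 1. Then min { yᵀQy + 2gᵀy : l ≤ ‖y‖ ≤ 1 } = min { yᵀ(Q − λ_Q I)y + 2gᵀy + λ_Q : ‖y‖ ≤ 1 }, i.e., the interval-bounded TRS admits an exact convex reformulation over the full unit ball. -/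
open Matrix

private lemma TRS_aux_expand {n : ℕ} (Q : Matrix (Fin n) (Fin n) ℝ) (hQ : Q.IsSymm)
    (y v g : Fin n → ℝ) (lam t : ℝ) (hv : Q.mulVec v = lam • v) :
    (y + t • v) ⬝ᵥ Q.mulVec (y + t • v) + 2 * (g ⬝ᵥ (y + t • v))
      = y ⬝ᵥ Q.mulVec y + 2 * (g ⬝ᵥ y)
        + lam * (v ⬝ᵥ v * t ^ 2 + 2 * (y ⬝ᵥ v) * t) + 2 * (t * (g ⬝ᵥ v)) := by
  have hsym : v ⬝ᵥ Q.mulVec y = y ⬝ᵥ Q.mulVec v := by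
    rw [dotProduct_mulVec, ← Matrix.mulVec_transpose, hQ.eq, dotProduct_comm]
  simp only [Matrix.mulVec_add, Matrix.mulVec_smul, hv, dotProduct_add, add_dotProduct,
    dotProduct_smul, smul_dotProduct, smul_eq_mul, hsym]
  ring

set_option maxHeartbeats 1000000

theorem interval_bounded_TRS_reformulation {n : ℕ} (Q : Matrix (Fin n) (Fin n) ℝ)
    (g : EuclideanSpace ℝ (Fin n)) (lamQ : ℝ) (l : ℝ)
    (hQ : Q.IsSymm)
    (hlb : ∀ y : EuclideanSpace ℝ (Fin n), lamQ * ‖y‖ ^ 2 ≤ y ⬝ᵥ Q.mulVec y)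
    (hev : ∃ v : EuclideanSpace ℝ (Fin n), v ≠ 0 ∧ Q.mulVec v = lamQ • (v : Fin n → ℝ))
    (hneg : lamQ < 0) (hl0 : 0 ≤ l) (hl1 : l ≤ 1) :
    sInf ((fun y : EuclideanSpace ℝ (Fin n) => y ⬝ᵥ Q.mulVec y + 2 * (g ⬝ᵥ y)) ''
        {y : EuclideanSpace ℝ (Fin n) | l ≤ ‖y‖ ∧ ‖y‖ ≤ 1}) =
      sInf ((fun y : EuclideanSpace ℝ (Fin n) =>
          y ⬝ᵥ (Q - lamQ • (1 : Matrix (Fin n) (Fin n) ℝ)).mulVec y + 2 * (g ⬝ᵥ y) + lamQ) ''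
        Metric.closedBall 0 1) := by
  classical
  obtain ⟨v, hv0, hvQ⟩ := hev
  set F : EuclideanSpace ℝ (Fin n) → ℝ :=
    fun y => y ⬝ᵥ Q.mulVec y + 2 * (g ⬝ᵥ y) with hF
  set G : EuclideanSpace ℝ (Fin n) → ℝ :=
    fun y => y ⬝ᵥ (Q - lamQ • (1 : Matrix (Fin n) (Fin n) ℝ)).mulVec y + 2 * (g ⬝ᵥ y) + lamQ
    with hG
  have dotp : ∀ x y : EuclideanSpace ℝ (Fin n), x ⬝ᵥ (y : Fin n → ℝ) = @inner ℝ _ _ x y := by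
    intro x y
    simp [dotProduct, PiLp.inner_apply, RCLike.inner_apply, mul_comm]
  have hsym : ∀ x y : EuclideanSpace ℝ (Fin n), x ⬝ᵥ Q.mulVec y = y ⬝ᵥ Q.mulVec x := by
    intro x y
    rw [dotProduct_mulVec, ← mulVec_transpose, hQ.eq, dotProduct_comm]
  -- G in terms of F
  have hGF : ∀ y : EuclideanSpace ℝ (Fin n), G y = F y + lamQ * (1 - ‖y‖ ^ 2) := by
    intro y
    have h1 : y ⬝ᵥ (Q - lamQ • (1 : Matrix (Fin n) (Fin n) ℝ)).mulVec y
        = y ⬝ᵥ Q.mulVec y - lamQ * (y ⬝ᵥ (y : Fin n → ℝ)) := by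
      rw [sub_mulVec, dotProduct_sub, smul_mulVec, one_mulVec, dotProduct_smul,
        smul_eq_mul]
    have h2 : y ⬝ᵥ (y : Fin n → ℝ) = ‖y‖ ^ 2 := by
      rw [dotp, real_inner_self_eq_norm_sq]
    simp only [hG, hF]
    rw [h1, h2]
    ring
  -- unit vector
  have hvn : (0:ℝ) < ‖v‖ := norm_pos_iff.mpr hv0
  set u : EuclideanSpace ℝ (Fin n) := ‖v‖⁻¹ • v with hu
  have hun : ‖u‖ = 1 := by
    rw [hu, norm_smul, norm_inv, norm_norm, inv_mul_cancel₀ (ne_of_gt hvn)]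
  -- nonemptiness
  have hAne : ({y : EuclideanSpace ℝ (Fin n) | l ≤ ‖y‖ ∧ ‖y‖ ≤ 1}).Nonempty :=
    ⟨u, by rw [Set.mem_setOf_eq, hun]; exact ⟨hl1, le_refl 1⟩⟩
  have hBne : (Metric.closedBall (0 : EuclideanSpace ℝ (Fin n)) 1).Nonempty :=
    ⟨u, by simp [hun]⟩
  -- lower bound
  set C : ℝ := lamQ - 2 * ‖g‖ with hC
  have hg0 : (0:ℝ) ≤ ‖g‖ := norm_nonneg g
  have hFbd : ∀ y : EuclideanSpace ℝ (Fin n), ‖y‖ ≤ 1 → C ≤ F y := by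
    intro y hy
    have h1 := hlb y
    have h2 : |(g ⬝ᵥ (y : Fin n → ℝ))| ≤ ‖g‖ * ‖y‖ := by
      rw [dotp]; exact abs_real_inner_le_norm g y
    have h3 := abs_le.mp h2
    have hyn : (0:ℝ) ≤ ‖y‖ := norm_nonneg y
    have hy2 : ‖y‖ ^ 2 ≤ 1 := by nlinarith
    have e1 : lamQ ≤ lamQ * ‖y‖ ^ 2 := by
      nlinarith [mul_nonneg (neg_nonneg.mpr hneg.le) (sub_nonneg.mpr hy2)]
    have e2 : ‖g‖ * ‖y‖ ≤ ‖g‖ := by nlinarith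
    simp only [hF, hC]
    linarith [h3.1]
  have hGbd : ∀ y : EuclideanSpace ℝ (Fin n), ‖y‖ ≤ 1 → C ≤ G y := by
    intro y hy
    have h1 := hlb y
    have h2 : |(g ⬝ᵥ (y : Fin n → ℝ))| ≤ ‖g‖ * ‖y‖ := by
      rw [dotp]; exact abs_real_inner_le_norm g y
    have h3 := abs_le.mp h2
    have hyn : (0:ℝ) ≤ ‖y‖ := norm_nonneg y
    have e2 : ‖g‖ * ‖y‖ ≤ ‖g‖ := by nlinarith
    rw [hGF y]
    simp only [hF, hC]
    linarith [h3.1]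
  have hAbdd : BddBelow (F '' {y : EuclideanSpace ℝ (Fin n) | l ≤ ‖y‖ ∧ ‖y‖ ≤ 1}) := by
    refine ⟨C, ?_⟩
    rintro x ⟨y, hy, rfl⟩
    exact hFbd y hy.2
  have hBbdd : BddBelow (G '' Metric.closedBall (0 : EuclideanSpace ℝ (Fin n)) 1) := by
    refine ⟨C, ?_⟩
    rintro x ⟨y, hy, rfl⟩
    exact hGbd y (by simpa [mem_closedBall_zero_iff] using hy)
  apply le_antisymm
  · -- sInf F-image ≤ sInf G-image : for each y in ball, find z in annulus with F z ≤ G y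
    apply le_csInf (hBne.image G)
    rintro x ⟨y, hy, rfl⟩
    rw [mem_closedBall_zero_iff] at hy
    -- construct z = y + t • v on the unit sphere with t * (g ⬝ᵥ v) ≤ 0
    set a : ℝ := ‖v‖ ^ 2 with ha
    set b : ℝ := @inner ℝ _ _ y v with hb
    set c : ℝ := 1 - ‖y‖ ^ 2 with hc
    have ha0 : (0:ℝ) < a := by positivity
    have hc0 : (0:ℝ) ≤ c := by nlinarith [norm_nonneg y]
    set s : ℝ := Real.sqrt (b ^ 2 + a * c) with hs
    have hs0 : (0:ℝ) ≤ s := Real.sqrt_nonneg _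
    have hs2 : s ^ 2 = b ^ 2 + a * c := Real.sq_sqrt (by nlinarith)
    have hsb : |b| ≤ s := by
      rw [← Real.sqrt_sq_eq_abs]
      exact Real.sqrt_le_sqrt (by nlinarith)
    have hsb' := abs_le.mp hsb
    set gv : ℝ := g ⬝ᵥ (v : Fin n → ℝ) with hgv
    set t : ℝ := if 0 ≤ gv then (-b - s) / a else (-b + s) / a with ht
    have htgv : t * gv ≤ 0 := by
      rw [ht]
      by_cases h : 0 ≤ gv
      · simp only [h, if_true]
        have : (-b - s) / a ≤ 0 := div_nonpos_of_nonpos_of_nonneg (by linarith) ha0.le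
        exact mul_nonpos_of_nonpos_of_nonneg this h
      · simp only [h, if_false]
        have : 0 ≤ (-b + s) / a := div_nonneg (by linarith) ha0.le
        exact mul_nonpos_of_nonneg_of_nonpos this (le_of_not_ge h)
    have hquad : a * t ^ 2 + 2 * b * t = c := by
      rw [ht]
      by_cases h : 0 ≤ gv <;> simp only [h, if_true, if_false] <;>
        field_simp <;> nlinarith [hs2]
    set z : EuclideanSpace ℝ (Fin n) := y + t • v with hz
    have hzn2 : ‖z‖ ^ 2 = 1 := by
      rw [hz, norm_add_sq_real, inner_smul_right, norm_smul]
      have : (‖t‖ * ‖v‖) ^ 2 = t ^ 2 * a := by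
        rw [ha, mul_pow, Real.norm_eq_abs, sq_abs]
      rw [this, ← hb]
      nlinarith [hquad]
    have hzn : ‖z‖ = 1 := by
      nlinarith [norm_nonneg z, hzn2]
    have hzmem : z ∈ {y : EuclideanSpace ℝ (Fin n) | l ≤ ‖y‖ ∧ ‖y‖ ≤ 1} := by
      rw [Set.mem_setOf_eq, hzn]; exact ⟨hl1, le_refl 1⟩
    have hFz : F z ≤ G y := by
      obtain ⟨y', hy'⟩ : ∃ y' : Fin n → ℝ, y' = y := ⟨y, rfl⟩
      obtain ⟨v', hv'⟩ : ∃ v' : Fin n → ℝ, v' = v := ⟨v, rfl⟩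
      obtain ⟨g', hg'⟩ : ∃ g' : Fin n → ℝ, g' = g := ⟨g, rfl⟩
      have hv'' : Q.mulVec v' = lamQ • v' := by rw [hv']; exact hvQ
      have h := TRS_aux_expand Q hQ y' v' g' lamQ t hv''
      rw [hy', hv', hg'] at h
      have hvv : (v : Fin n → ℝ) ⬝ᵥ v = a := by rw [dotp, real_inner_self_eq_norm_sq]
      have hyv : (y : Fin n → ℝ) ⬝ᵥ v = b := by rw [dotp]
      rw [hvv, hyv] at h
      have hexp : F z = F y + lamQ * (a * t ^ 2 + 2 * b * t) + 2 * (t * gv) := h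
      rw [hexp, hquad, hGF y, ← hc]
      linarith
    calc sInf (F '' {y : EuclideanSpace ℝ (Fin n) | l ≤ ‖y‖ ∧ ‖y‖ ≤ 1})
        ≤ F z := csInf_le hAbdd ⟨z, hzmem, rfl⟩
      _ ≤ G y := hFz
  · -- sInf G-image ≤ sInf F-image : for y in annulus, G y ≤ F y and y in ball
    apply le_csInf (hAne.image F)
    rintro x ⟨y, hy, rfl⟩
    have hyb : y ∈ Metric.closedBall (0 : EuclideanSpace ℝ (Fin n)) 1 := by
      rw [mem_closedBall_zero_iff]; exact hy.2
    have : G y ≤ F y := by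
      rw [hGF y]
      have h2 : ‖y‖ ^ 2 ≤ 1 := by nlinarith [hy.2, norm_nonneg y]
      nlinarith [mul_nonpos_of_nonpos_of_nonneg hneg.le (sub_nonneg.mpr h2)]
    calc sInf (G '' Metric.closedBall (0 : EuclideanSpace ℝ (Fin n)) 1)
        ≤ G y := csInf_le hBbdd ⟨y, hyb, rfl⟩
      _ ≤ F y := this
end

section
/- Let Q̃ be symmetric (n+1)×(n+1) with minimum eigenvalue λ < 0 of multiplicity at least two, g̃ ∈ ℝ^{n+1}, and for t ∈ [0,1] define V_t = [[(1−t)I + tQ̃, tg̃],[tg̃ᵀ, t−1]]. Then the maximal s ∈ [0,1] such that V_t has exactly one negative eigenvalue for all t ∈ [0,s], V_t is invertible for all t ∈ (0,s), and V_s is singular is s = 1/(1−λ). -/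
open Matrix

/-- The bordered matrix `V_t = [[(1-t)I + tQ̃, t g̃],[t g̃ᵀ, t-1]]`. -/
noncomputable def borderedV {n : ℕ} (Qt : Matrix (Fin (n+1)) (Fin (n+1)) ℝ)
    (gt : Fin (n+1) → ℝ) (t : ℝ) : Matrix (Fin (n+1) ⊕ Unit) (Fin (n+1) ⊕ Unit) ℝ :=
  Matrix.fromBlocks ((1-t) • (1 : Matrix (Fin (n+1)) (Fin (n+1)) ℝ) + t • Qt)
    (Matrix.replicateCol Unit (t • gt)) (Matrix.replicateRow Unit (t • gt)) ((t-1) • (1 : Matrix Unit Unit ℝ))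

/-!
Write `c(t) = 1 - t (1 - λ)` for the smallest eigenvalue of the top-left block `(1-t) I + t Q̃`;
it is nonnegative exactly for `t ≤ s = 1 / (1 - λ)`. By Sylvester's law of inertia the number of
negative eigenvalues of a symmetric matrix is the largest dimension of a subspace on which its
quadratic form is negative definite (`QuadraticForm.sigNeg`). The last coordinate axis is such a
subspace for `t < 1`, and for `t ≤ s` the form is nonnegative on the `n + 1` top coordinates, so
there is exactly one negative eigenvalue. For `t > s` the at least two-dimensional `λ`-eigenspace
of `Q̃` becomes negative definite. At `t = s`, a `λ`-eigenvector orthogonal to `g̃` lies in the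
kernel of `V_s`; for `t < s`, pairing a kernel vector `(y, a)` with `(y, -a)` cancels the
off-diagonal blocks and leaves `yᵀ((1-t) I + t Q̃) y + (1-t) a² = 0`, so the vector vanishes.
-/

open Module QuadraticMap

theorem Matrix.toQuadraticForm'_apply {R m : Type*} [CommRing R] [Fintype m] [DecidableEq m]
    (A : Matrix m m R) (x : m → R) : A.toQuadraticForm' x = x ⬝ᵥ A *ᵥ x := by
  simp [Matrix.toQuadraticForm', Matrix.toLinearMap₂'_apply']

namespace Matrix.IsHermitian

variable {m : Type*} [Fintype m] [DecidableEq m] {A : Matrix m m ℝ}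

theorem weightedSumSquares_star_eigenvectorUnitary_mulVec (hA : A.IsHermitian) (x : m → ℝ) :
    weightedSumSquares ℝ hA.eigenvalues (star (hA.eigenvectorUnitary : Matrix m m ℝ) *ᵥ x) =
      x ⬝ᵥ A *ᵥ x := by
  conv_rhs => rw [hA.spectral_theorem, Unitary.conjStarAlgAut_apply, ← mulVec_mulVec,
    ← mulVec_mulVec, dotProduct_mulVec, ← mulVec_transpose]
  simp [dotProduct, mulVec_diagonal, mul_left_comm, star_eq_conjTranspose]

theorem toQuadraticForm'_equivalent_weightedSumSquares (hA : A.IsHermitian) :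
    A.toQuadraticForm'.Equivalent (weightedSumSquares ℝ hA.eigenvalues) :=
  ⟨{ UnitaryGroup.toLinearEquiv (star hA.eigenvectorUnitary) with
      map_app' := fun x => (hA.weightedSumSquares_star_eigenvectorUnitary_mulVec x).trans
        (A.toQuadraticForm'_apply x).symm }⟩

theorem sigNeg_toQuadraticForm' (hA : A.IsHermitian) :
    sigNeg A.toQuadraticForm' = {i | hA.eigenvalues i < 0}.ncard :=
  QuadraticForm.sigNeg_of_equiv_weightedSumSquares hA.toQuadraticForm'_equivalent_weightedSumSquares

theorem finrank_le_ncard_eigenvalues_neg (hA : A.IsHermitian) {V : Submodule ℝ (m → ℝ)}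
    (hV : ∀ x ∈ V, x ≠ 0 → x ⬝ᵥ A *ᵥ x < 0) :
    finrank ℝ V ≤ {i | hA.eigenvalues i < 0}.ncard := by
  rw [← hA.sigNeg_toQuadraticForm']
  refine le_sigNeg_of_negDef _ fun x hx => ?_
  simpa [toQuadraticForm'_apply] using hV x x.2 (by simpa using hx)

theorem one_le_ncard_eigenvalues_neg (hA : A.IsHermitian) {x : m → ℝ}
    (hx : x ⬝ᵥ A *ᵥ x < 0) : 1 ≤ {i | hA.eigenvalues i < 0}.ncard := by
  have hx0 : x ≠ 0 := by rintro rfl; simp at hx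
  rw [← finrank_span_singleton (K := ℝ) hx0]
  refine hA.finrank_le_ncard_eigenvalues_neg fun y hy hy0 => ?_
  obtain ⟨c, rfl⟩ := Submodule.mem_span_singleton.mp hy
  have hc : c ≠ 0 := by rintro rfl; simp at hy0
  simpa [mulVec_smul, smul_eq_mul, mul_assoc] using mul_neg_of_pos_of_neg (mul_self_pos.mpr hc) hx

theorem ncard_eigenvalues_neg_add_finrank_le (hA : A.IsHermitian) {V : Submodule ℝ (m → ℝ)}
    (hV : ∀ x ∈ V, 0 ≤ x ⬝ᵥ A *ᵥ x) :
    {i | hA.eigenvalues i < 0}.ncard + finrank ℝ V ≤ Fintype.card m := by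
  rw [← hA.sigNeg_toQuadraticForm', ← sigPos_neg, ← finrank_fintype_fun_eq_card (R := ℝ)]
  exact QuadraticForm.sigPos_add_finrank_le_of_nonpos fun x hx => by
    simpa [toQuadraticForm'_apply] using hV x hx

end Matrix.IsHermitian

theorem Submodule.exists_mem_ne_zero_dotProduct_eq_zero {K ι : Type*} [Field K] [Fintype ι]
    (E : Submodule K (ι → K)) (hE : 1 < finrank K E) (g : ι → K) :
    ∃ u ∈ E, u ≠ 0 ∧ g ⬝ᵥ u = 0 := by
  let φ : E →ₗ[K] K := dotProductBilin K K g ∘ₗ E.subtype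
  have hrange : finrank K (LinearMap.range φ) ≤ 1 :=
    (Submodule.finrank_le _).trans_eq (finrank_self K)
  have hker : LinearMap.ker φ ≠ ⊥ := by
    intro h
    have := φ.finrank_range_add_finrank_ker
    rw [h, finrank_bot] at this
    omega
  obtain ⟨⟨u, huE⟩, hu, hu0⟩ := (Submodule.ne_bot_iff _).mp hker
  exact ⟨u, huE, by simpa using hu0, hu⟩

theorem Module.End.le_finrank_eigenspace {K V ι : Type*} [Field K] [AddCommGroup V] [Module K V]
    [FiniteDimensional K V] [Fintype ι] {f : End K V} {μ : K} {v : ι → V}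
    (hv : LinearIndependent K v) (hfv : ∀ i, f (v i) = μ • v i) :
    Fintype.card ι ≤ finrank K (f.eigenspace μ) := by
  rw [← finrank_span_eq_card hv]
  exact Submodule.finrank_mono <| Submodule.span_le.mpr <| Set.range_subset_iff.mpr fun i =>
    End.mem_eigenspace_iff.mpr (hfv i)

def LinearMap.sumElimZero (R α β : Type*) [Semiring R] : (α → R) →ₗ[R] (α ⊕ β → R) where
  toFun y := Sum.elim y 0
  map_add' y z := by rw [← Sum.elim_add_add, add_zero]
  map_smul' c y := by ext (i | i) <;> simp

@[simp]
theorem LinearMap.sumElimZero_apply {R α β : Type*} [Semiring R] (y : α → R) :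
    LinearMap.sumElimZero R α β y = Sum.elim y 0 :=
  rfl

theorem LinearMap.sumElimZero_injective {R α β : Type*} [Semiring R] :
    Function.Injective (LinearMap.sumElimZero R α β) :=
  fun _ _ h => funext fun i => congrFun h (Sum.inl i)

namespace Matrix

variable {R : Type*} [CommRing R] {l m : Type*} [Fintype l] [Fintype m]

theorem sumElim_zero_dotProduct_fromBlocks_mulVec (A : Matrix l l R) (B : Matrix l m R)
    (C : Matrix m l R) (D : Matrix m m R) (y : l → R) :
    Sum.elim y 0 ⬝ᵥ fromBlocks A B C D *ᵥ Sum.elim y 0 = y ⬝ᵥ A *ᵥ y := by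
  simp [fromBlocks_mulVec, sumElim_dotProduct_sumElim]

theorem zero_sumElim_dotProduct_fromBlocks_mulVec (A : Matrix l l R) (B : Matrix l m R)
    (C : Matrix m l R) (D : Matrix m m R) (a : m → R) :
    Sum.elim 0 a ⬝ᵥ fromBlocks A B C D *ᵥ Sum.elim 0 a = a ⬝ᵥ D *ᵥ a := by
  simp [fromBlocks_mulVec, sumElim_dotProduct_sumElim]

theorem sumElim_neg_dotProduct_fromBlocks_transpose_mulVec (A : Matrix l l R) (B : Matrix l m R)
    (D : Matrix m m R) (y : l → R) (a : m → R) :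
    Sum.elim y (-a) ⬝ᵥ fromBlocks A B Bᵀ D *ᵥ Sum.elim y a = y ⬝ᵥ A *ᵥ y - a ⬝ᵥ D *ᵥ a := by
  rw [fromBlocks_mulVec, sumElim_dotProduct_sumElim, Sum.elim_comp_inl, Sum.elim_comp_inr,
    dotProduct_add, dotProduct_add, mulVec_transpose, dotProduct_comm (-a) (y ᵥ* B),
    ← dotProduct_mulVec, mulVec_neg, dotProduct_neg, neg_dotProduct]
  ring

theorem smul_one_add_smul_mulVec [DecidableEq l] (Q : Matrix l l R) (a b : R) (y : l → R) :
    (a • 1 + b • Q) *ᵥ y = a • y + b • Q *ᵥ y := by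
  rw [add_mulVec, smul_mulVec, smul_mulVec, one_mulVec]

end Matrix

section Bordered

variable {n : ℕ} {Qt : Matrix (Fin (n+1)) (Fin (n+1)) ℝ} (gt : Fin (n+1) → ℝ) {lam t : ℝ}

theorem borderedV_eq_fromBlocks (Qt : Matrix (Fin (n+1)) (Fin (n+1)) ℝ) (t : ℝ) :
    borderedV Qt gt t = fromBlocks ((1-t) • 1 + t • Qt) (replicateCol Unit (t • gt))
      (replicateCol Unit (t • gt))ᵀ ((t-1) • 1) := by
  rw [transpose_replicateCol]
  rfl

theorem le_dotProduct_topBlock_mulVec (hlb : ∀ y, lam * (y ⬝ᵥ y) ≤ y ⬝ᵥ Qt *ᵥ y) (ht : 0 ≤ t)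
    (y : Fin (n+1) → ℝ) :
    (1 - t * (1 - lam)) * (y ⬝ᵥ y) ≤ y ⬝ᵥ ((1-t) • 1 + t • Qt) *ᵥ y := by
  rw [smul_one_add_smul_mulVec, dotProduct_add, dotProduct_smul, dotProduct_smul, smul_eq_mul,
    smul_eq_mul]
  nlinarith [mul_le_mul_of_nonneg_left (hlb y) ht]

theorem topBlock_mulVec_of_mulVec_eq_smul {y : Fin (n+1) → ℝ} (hy : Qt *ᵥ y = lam • y) :
    ((1-t) • 1 + t • Qt) *ᵥ y = (1 - t * (1 - lam)) • y := by
  rw [smul_one_add_smul_mulVec, hy, smul_smul, ← add_smul]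
  ring_nf

theorem ncard_eigenvalues_neg_borderedV_le_one (hV : (borderedV Qt gt t).IsHermitian)
    (hlb : ∀ y, lam * (y ⬝ᵥ y) ≤ y ⬝ᵥ Qt *ᵥ y) (ht0 : 0 ≤ t) (hts : t * (1 - lam) ≤ 1) :
    {i | hV.eigenvalues i < 0}.ncard ≤ 1 := by
  have := hV.ncard_eigenvalues_neg_add_finrank_le
    (V := LinearMap.range (LinearMap.sumElimZero ℝ (Fin (n+1)) Unit)) ?_
  · rw [LinearMap.finrank_range_of_inj LinearMap.sumElimZero_injective] at this
    simp only [Fintype.card_sum, Fintype.card_fin, Fintype.card_unit, finrank_fin_fun] at this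
    omega
  · rintro _ ⟨y, rfl⟩
    rw [LinearMap.sumElimZero_apply, borderedV_eq_fromBlocks,
      sumElim_zero_dotProduct_fromBlocks_mulVec]
    exact (mul_nonneg (by linarith) (by simpa using dotProduct_star_self_nonneg y)).trans
      (le_dotProduct_topBlock_mulVec hlb ht0 y)

theorem one_le_ncard_eigenvalues_neg_borderedV (hV : (borderedV Qt gt t).IsHermitian)
    (ht : t < 1) : 1 ≤ {i | hV.eigenvalues i < 0}.ncard :=
  hV.one_le_ncard_eigenvalues_neg (x := Sum.elim 0 1) <| by
    rw [borderedV_eq_fromBlocks, zero_sumElim_dotProduct_fromBlocks_mulVec]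
    simpa [smul_mulVec] using sub_neg.mpr ht

theorem two_le_ncard_eigenvalues_neg_borderedV (hV : (borderedV Qt gt t).IsHermitian)
    (hE : 2 ≤ finrank ℝ (End.eigenspace (toLin' Qt) lam)) (hts : 1 < t * (1 - lam)) :
    2 ≤ {i | hV.eigenvalues i < 0}.ncard := by
  refine hE.trans ?_
  rw [(Submodule.equivMapOfInjective _ LinearMap.sumElimZero_injective _).finrank_eq]
  refine hV.finrank_le_ncard_eigenvalues_neg ?_
  rintro _ ⟨y, hy, rfl⟩ hy0
  rw [LinearMap.sumElimZero_apply] at hy0 ⊢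
  rw [borderedV_eq_fromBlocks, sumElim_zero_dotProduct_fromBlocks_mulVec,
    topBlock_mulVec_of_mulVec_eq_smul (End.mem_eigenspace_iff.mp hy), dotProduct_smul,
    smul_eq_mul]
  have hy0 : y ≠ 0 := by rintro rfl; simp at hy0
  exact mul_neg_of_neg_of_pos (by linarith)
    ((dotProduct_star_self_nonneg y).lt_of_ne' (by simpa using hy0))

theorem det_borderedV_ne_zero (hlb : ∀ y, lam * (y ⬝ᵥ y) ≤ y ⬝ᵥ Qt *ᵥ y) (ht0 : 0 ≤ t)
    (ht1 : t < 1) (hts : t * (1 - lam) < 1) : (borderedV Qt gt t).det ≠ 0 := by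
  intro hdet
  obtain ⟨x, hx0, hVx⟩ := exists_mulVec_eq_zero_iff.mpr hdet
  rw [← Sum.elim_comp_inl_inr x] at hx0 hVx
  set y := x ∘ Sum.inl
  set a := x ∘ Sum.inr
  have hpair := sumElim_neg_dotProduct_fromBlocks_transpose_mulVec
    ((1-t) • 1 + t • Qt) (replicateCol Unit (t • gt)) ((t-1) • 1) y a
  rw [← borderedV_eq_fromBlocks, hVx, dotProduct_zero, smul_mulVec, one_mulVec,
    dotProduct_smul, smul_eq_mul] at hpair
  have hy := le_dotProduct_topBlock_mulVec hlb ht0 y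
  have hy2 : 0 ≤ y ⬝ᵥ y := by simpa using dotProduct_star_self_nonneg y
  have ha2 : 0 ≤ a ⬝ᵥ a := by simpa using dotProduct_star_self_nonneg a
  have hy0 : y ⬝ᵥ y = 0 := by nlinarith
  have ha0 : a ⬝ᵥ a = 0 := by nlinarith
  rw [dotProduct_self_eq_zero] at hy0 ha0
  exact hx0 (by rw [hy0, ha0, Sum.elim_zero_zero])

theorem det_borderedV_eq_zero (hE : 1 < finrank ℝ (End.eigenspace (toLin' Qt) lam))
    (hts : t * (1 - lam) = 1) : (borderedV Qt gt t).det = 0 := by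
  obtain ⟨u, hu, hu0, hgu⟩ := Submodule.exists_mem_ne_zero_dotProduct_eq_zero _ hE gt
  refine exists_mulVec_eq_zero_iff.mp ⟨Sum.elim u 0, ?_, ?_⟩
  · exact fun h => hu0 (funext fun i => congrFun h (Sum.inl i))
  · rw [borderedV_eq_fromBlocks, fromBlocks_mulVec, Sum.elim_comp_inl, Sum.elim_comp_inr,
      topBlock_mulVec_of_mulVec_eq_smul (End.mem_eigenspace_iff.mp hu), hts]
    ext (i | i)
    · simp
    · simp [smul_mulVec, replicateRow_mulVec_eq_const, hgu]

end Bordered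

theorem s_value_computation_general {n : ℕ} (Qt : Matrix (Fin (n+1)) (Fin (n+1)) ℝ)
    (gt : Fin (n+1) → ℝ) (lam : ℝ)
    (hlb : ∀ y : Fin (n+1) → ℝ, lam * (∑ i, y i ^ 2) ≤ y ⬝ᵥ Qt.mulVec y)
    (hmult : ∃ v w : Fin (n+1) → ℝ, LinearIndependent ℝ ![v, w] ∧
      Qt.mulVec v = lam • v ∧ Qt.mulVec w = lam • w)
    (hneg : lam < 0)
    (hherm : ∀ t : ℝ, (borderedV Qt gt t).IsHermitian) :
    (1 / (1 - lam)) ∈ Set.Ioo (0:ℝ) 1 ∧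
    (∀ t ∈ Set.Icc (0:ℝ) (1 / (1 - lam)),
      {i | (hherm t).eigenvalues i < 0}.ncard = 1) ∧
    (∀ t ∈ Set.Ioo (0:ℝ) (1 / (1 - lam)), (borderedV Qt gt t).det ≠ 0) ∧
    (borderedV Qt gt (1 / (1 - lam))).det = 0 ∧
    (∀ s' ∈ Set.Icc (0:ℝ) 1,
      (∀ t ∈ Set.Icc (0:ℝ) s', {i | (hherm t).eigenvalues i < 0}.ncard = 1) →
      s' ≤ 1 / (1 - lam)) := by
  obtain ⟨v, w, hvw, hQv, hQw⟩ := hmult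
  have hlb' : ∀ y, lam * (y ⬝ᵥ y) ≤ y ⬝ᵥ Qt *ᵥ y := fun y => by
    simpa [dotProduct, _root_.sq] using hlb y
  have hE : 2 ≤ finrank ℝ (End.eigenspace (toLin' Qt) lam) := by
    simpa using End.le_finrank_eigenspace hvw (by simpa [Fin.forall_fin_two] using ⟨hQv, hQw⟩)
  have hlam : 0 < 1 - lam := by linarith
  have hs1 : 1 / (1 - lam) < 1 := by rw [div_lt_one hlam]; linarith
  refine ⟨⟨by positivity, hs1⟩, fun t ⟨ht0, hts⟩ => ?_, fun t ⟨ht0, hts⟩ => ?_, ?_,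
    fun s' ⟨hs'0, _⟩ hs' => ?_⟩
  · exact (ncard_eigenvalues_neg_borderedV_le_one gt (hherm t) hlb' ht0
      ((le_div_iff₀ hlam).mp hts)).antisymm
      (one_le_ncard_eigenvalues_neg_borderedV gt (hherm t) (hts.trans_lt hs1))
  · exact det_borderedV_ne_zero gt hlb' ht0.le (hts.trans hs1)
      (by rwa [lt_div_iff₀ hlam] at hts)
  · exact det_borderedV_eq_zero gt hE (by field_simp)
  · by_contra! hs
    rw [div_lt_iff₀ hlam] at hs
    have := two_le_ncard_eigenvalues_neg_borderedV gt (hherm s') hE hs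
    rw [hs' s' ⟨hs'0, le_rfl⟩] at this
    omega

theorem s_value_computation {n : ℕ} (Qt : Matrix (Fin (n+1)) (Fin (n+1)) ℝ)
    (gt : Fin (n+1) → ℝ) (lam : ℝ)
    (hQ : Qt.IsSymm)
    (hlb : ∀ y : Fin (n+1) → ℝ, lam * (∑ i, y i ^ 2) ≤ y ⬝ᵥ Qt.mulVec y)
    (hmult : ∃ v w : Fin (n+1) → ℝ, LinearIndependent ℝ ![v, w] ∧
      Qt.mulVec v = lam • v ∧ Qt.mulVec w = lam • w)
    (hneg : lam < 0)
    (hherm : ∀ t : ℝ, (borderedV Qt gt t).IsHermitian) :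
    (1 / (1 - lam)) ∈ Set.Ioo (0:ℝ) 1 ∧
    (∀ t ∈ Set.Icc (0:ℝ) (1 / (1 - lam)),
      {i | (hherm t).eigenvalues i < 0}.ncard = 1) ∧
    (∀ t ∈ Set.Ioo (0:ℝ) (1 / (1 - lam)), (borderedV Qt gt t).det ≠ 0) ∧
    (borderedV Qt gt (1 / (1 - lam))).det = 0 ∧
    (∀ s' ∈ Set.Icc (0:ℝ) 1,
      (∀ t ∈ Set.Icc (0:ℝ) s', {i | (hherm t).eigenvalues i < 0}.ncard = 1) →
      s' ≤ 1 / (1 - lam)) :=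
  s_value_computation_general Qt gt lam hlb hmult hneg hherm
end

section
/- Let Q̃ be a symmetric matrix with minimum eigenvalue λ of multiplicity ≥ 2, and let V_t = [[(1−t)I + tQ̃, tg̃],[tg̃ᵀ, t−1]] for t ∈ (0,1). Then the second-smallest eigenvalue of V_t equals 1 − t + tλ, the minimum eigenvalue of (1−t)I + tQ̃. -/
/-! On vectors with vanishing last coordinate the quadratic form of `V_t` is
`(1 - t)|y|² + t yᵀQ̃y ≥ μ|y|²`, where `μ = 1 - t + tλ`, with equality on the (at least
two-dimensional) `λ`-eigenspace of `Q̃`. Expanding `xᵀAx = ∑ λₖ ⟨bₖ, x⟩²` in an orthonormal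
eigenbasis, a hyperplane on which the form is `≥ μ` leaves room for at most one eigenvalue
below `μ`, and a plane on which it is `≤ μ` forces a second eigenvalue `≤ μ` besides any given
one. So the second-smallest eigenvalue of `V_t` is `μ`. -/

open Matrix

lemma exists_ne_zero_mul_add_mul_eq_zero {R : Type*} [CommRing R] [Nontrivial R] (p q : R) :
    ∃ a c : R, (a ≠ 0 ∨ c ≠ 0) ∧ a * p + c * q = 0 := by
  by_cases hp : p = 0
  · exact ⟨1, 0, Or.inl one_ne_zero, by simp [hp]⟩
  · exact ⟨q, -p, Or.inr (neg_ne_zero.mpr hp), by ring⟩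

lemma exists_equiv_fin_monotone {ι α : Type*} [LinearOrder α] {N : ℕ} (f : ι → α)
    (e : ι ≃ Fin N) : ∃ σ : ι ≃ Fin N, Monotone fun k => f (σ.symm k) :=
  ⟨e.trans (Tuple.sort (f ∘ e.symm)).symm, Tuple.monotone_sort (f ∘ e.symm)⟩

namespace Matrix.IsHermitian

variable {m : Type*} [Fintype m] [DecidableEq m] {A : Matrix m m ℝ} (hA : A.IsHermitian)

lemma dotProduct_eigenvectorBasis (i j : m) :
    ⇑(hA.eigenvectorBasis i) ⬝ᵥ ⇑(hA.eigenvectorBasis j) = if i = j then 1 else 0 := by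
  rw [← orthonormal_iff_ite.mp hA.eigenvectorBasis.orthonormal i j,
    EuclideanSpace.inner_eq_star_dotProduct, star_trivial, dotProduct_comm]

lemma mulVec_dotProduct_eigenvectorBasis (x : m → ℝ) (k : m) :
    A *ᵥ x ⬝ᵥ ⇑(hA.eigenvectorBasis k) =
      hA.eigenvalues k * (⇑(hA.eigenvectorBasis k) ⬝ᵥ x) := by
  have hT : Aᵀ = A := by rw [← conjTranspose_eq_transpose_of_trivial]; exact hA
  rw [← vecMul_transpose, hT, ← dotProduct_mulVec, hA.mulVec_eigenvectorBasis, dotProduct_smul,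
    smul_eq_mul, dotProduct_comm]

lemma dotProduct_mulVec_eq_sum (x : m → ℝ) :
    x ⬝ᵥ A *ᵥ x = ∑ k, hA.eigenvalues k * (⇑(hA.eigenvectorBasis k) ⬝ᵥ x) ^ 2 := by
  have h := hA.eigenvectorBasis.sum_inner_mul_inner (WithLp.toLp 2 x) (WithLp.toLp 2 (A *ᵥ x))
  simp only [EuclideanSpace.inner_eq_star_dotProduct, star_trivial,
    hA.mulVec_dotProduct_eigenvectorBasis] at h
  rw [dotProduct_comm, ← h]
  exact Finset.sum_congr rfl fun k _ => by ring

lemma dotProduct_self_eq_sum (x : m → ℝ) :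
    x ⬝ᵥ x = ∑ k, (⇑(hA.eigenvectorBasis k) ⬝ᵥ x) ^ 2 := by
  have h := hA.eigenvectorBasis.sum_inner_mul_inner (WithLp.toLp 2 x) (WithLp.toLp 2 x)
  simp only [EuclideanSpace.inner_eq_star_dotProduct, star_trivial] at h
  rw [← h]
  exact Finset.sum_congr rfl fun k _ => by rw [dotProduct_comm x]; ring

lemma le_eigenvalues_or_of_le_on_ker {μ : ℝ} (ℓ : (m → ℝ) →ₗ[ℝ] ℝ)
    (hℓ : ∀ x, ℓ x = 0 → μ * (x ⬝ᵥ x) ≤ x ⬝ᵥ A *ᵥ x) {i j : m} (hij : i ≠ j) :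
    μ ≤ hA.eigenvalues i ∨ μ ≤ hA.eigenvalues j := by
  obtain ⟨a, c, hac, hℓ0⟩ :=
    exists_ne_zero_mul_add_mul_eq_zero (ℓ (hA.eigenvectorBasis i)) (ℓ (hA.eigenvectorBasis j))
  set x := a • ⇑(hA.eigenvectorBasis i) + c • ⇑(hA.eigenvectorBasis j)
  have hx : ℓ x = 0 := by simpa only [x, map_add, map_smul, smul_eq_mul] using hℓ0
  have hquad : x ⬝ᵥ A *ᵥ x = a ^ 2 * hA.eigenvalues i + c ^ 2 * hA.eigenvalues j := by
    simp only [x, mulVec_add, mulVec_smul, hA.mulVec_eigenvectorBasis, add_dotProduct,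
      dotProduct_add, smul_dotProduct, dotProduct_smul, hA.dotProduct_eigenvectorBasis, hij,
      hij.symm, if_true, if_false, smul_eq_mul]
    ring
  have hnorm : x ⬝ᵥ x = a ^ 2 + c ^ 2 := by
    simp only [x, add_dotProduct, dotProduct_add, smul_dotProduct, dotProduct_smul,
      hA.dotProduct_eigenvectorBasis, hij, hij.symm, if_true, if_false, smul_eq_mul]
    ring
  have hbound := hℓ x hx
  rw [hquad, hnorm] at hbound
  by_contra! ⟨hi, hj⟩
  rcases hac with ha | hc
  · nlinarith [mul_lt_mul_of_pos_left hi (pow_pos (abs_pos.mpr ha) 2), sq_abs a]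
  · nlinarith [mul_lt_mul_of_pos_left hj (pow_pos (abs_pos.mpr hc) 2), sq_abs c]

lemma exists_ne_eigenvalue_le_of_le_on_span_pair {μ : ℝ} {u v : m → ℝ}
    (huv : LinearIndependent ℝ ![u, v])
    (h : ∀ x ∈ Submodule.span ℝ {u, v}, x ⬝ᵥ A *ᵥ x ≤ μ * (x ⬝ᵥ x)) (i : m) :
    ∃ j, j ≠ i ∧ hA.eigenvalues j ≤ μ := by
  obtain ⟨a, c, hac, h0⟩ := exists_ne_zero_mul_add_mul_eq_zero
    (⇑(hA.eigenvectorBasis i) ⬝ᵥ u) (⇑(hA.eigenvectorBasis i) ⬝ᵥ v)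
  set x := a • u + c • v
  have hx : x ≠ 0 := fun hx => by have := LinearIndependent.pair_iff.mp huv a c hx; tauto
  have hxi : ⇑(hA.eigenvectorBasis i) ⬝ᵥ x = 0 := by
    simpa only [x, dotProduct_add, dotProduct_smul, smul_eq_mul] using h0
  obtain ⟨j, hj⟩ : ∃ j, ⇑(hA.eigenvectorBasis j) ⬝ᵥ x ≠ 0 := by
    by_contra! hzero
    refine hx (dotProduct_self_eq_zero.mp ?_)
    simp only [hA.dotProduct_self_eq_sum x, hzero]
    simp
  have hji : j ≠ i := fun hji => hj (hji ▸ hxi)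
  by_contra! hgt
  have hexcess : 0 < x ⬝ᵥ A *ᵥ x - μ * (x ⬝ᵥ x) := by
    rw [hA.dotProduct_mulVec_eq_sum, hA.dotProduct_self_eq_sum, Finset.mul_sum,
      ← Finset.sum_sub_distrib]
    refine Finset.sum_pos' (fun k _ => ?_) ⟨j, Finset.mem_univ j, ?_⟩
    · rcases eq_or_ne k i with rfl | hki
      · simp [hxi]
      · rw [← sub_mul]
        exact mul_nonneg (sub_nonneg.mpr (hgt k hki).le) (sq_nonneg _)
    · rw [← sub_mul]
      exact mul_pos (sub_pos.mpr (hgt j hji)) (by positivity)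
  linarith [h x (Submodule.mem_span_pair.mpr ⟨a, c, rfl⟩)]

end Matrix.IsHermitian

lemma linearIndependent_pair_sumElim_zero {R α β : Type*} [Semiring R] {v w : α → R}
    (h : LinearIndependent R ![v, w]) :
    LinearIndependent R ![Sum.elim v (0 : β → R), Sum.elim w 0] :=
  .of_comp (LinearMap.funLeft R R Sum.inl) (by convert h using 1; ext i; fin_cases i <;> rfl)

section Bordered

variable {n : ℕ} (Qt : Matrix (Fin (n+1)) (Fin (n+1)) ℝ) (gt : Fin (n+1) → ℝ) (t : ℝ)

lemma sumElim_dotProduct_borderedV_mulVec (y : Fin (n+1) → ℝ) :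
    Sum.elim y 0 ⬝ᵥ borderedV Qt gt t *ᵥ Sum.elim y 0 =
      (1 - t) * (y ⬝ᵥ y) + t * (y ⬝ᵥ Qt *ᵥ y) := by
  simp only [borderedV, fromBlocks_mulVec, Sum.elim_comp_inl, Sum.elim_comp_inr, mulVec_zero,
    add_zero, sumElim_dotProduct_sumElim, zero_dotProduct, add_mulVec, smul_mulVec,
    one_mulVec, dotProduct_add, dotProduct_smul, smul_eq_mul]

lemma le_dotProduct_borderedV_mulVec {lam : ℝ}
    (hlb : ∀ y : Fin (n+1) → ℝ, lam * (∑ i, y i ^ 2) ≤ y ⬝ᵥ Qt *ᵥ y) (ht : 0 ≤ t)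
    (x : Fin (n+1) ⊕ Unit → ℝ) (hx : x (Sum.inr ()) = 0) :
    (1 - t + t * lam) * (x ⬝ᵥ x) ≤ x ⬝ᵥ borderedV Qt gt t *ᵥ x := by
  set y : Fin (n+1) → ℝ := fun i => x (Sum.inl i)
  have hxy : x = Sum.elim y 0 := by
    ext (i | u)
    · rfl
    · simpa using hx
  have hyy : ∑ i, y i ^ 2 = y ⬝ᵥ y := by simp only [dotProduct, sq]
  rw [hxy, sumElim_dotProduct_borderedV_mulVec, sumElim_dotProduct_sumElim, zero_dotProduct,
    add_zero]
  nlinarith [mul_le_mul_of_nonneg_left (hyy ▸ hlb y) ht]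

lemma dotProduct_borderedV_mulVec_of_mem_span {lam : ℝ} {v w : Fin (n+1) → ℝ}
    (hv : Qt *ᵥ v = lam • v) (hw : Qt *ᵥ w = lam • w) {x : Fin (n+1) ⊕ Unit → ℝ}
    (hx : x ∈ Submodule.span ℝ {Sum.elim v 0, Sum.elim w 0}) :
    x ⬝ᵥ borderedV Qt gt t *ᵥ x = (1 - t + t * lam) * (x ⬝ᵥ x) := by
  obtain ⟨a, c, rfl⟩ := Submodule.mem_span_pair.mp hx
  have hlift :
      a • Sum.elim v 0 + c • Sum.elim w 0 = Sum.elim (a • v + c • w) (0 : Unit → ℝ) := by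
    ext (i | u) <;> simp
  have heigen : Qt *ᵥ (a • v + c • w) = lam • (a • v + c • w) := by
    rw [mulVec_add, mulVec_smul, mulVec_smul, hv, hw, smul_add, smul_comm a, smul_comm c]
  rw [hlift, sumElim_dotProduct_borderedV_mulVec, heigen, sumElim_dotProduct_sumElim,
    zero_dotProduct, add_zero, dotProduct_smul, smul_eq_mul]
  ring

end Bordered

theorem second_smallest_eigenvalue_general {n : ℕ} (Qt : Matrix (Fin (n+1)) (Fin (n+1)) ℝ)
    (gt : Fin (n+1) → ℝ) (lam : ℝ)
    (hlb : ∀ y : Fin (n+1) → ℝ, lam * (∑ i, y i ^ 2) ≤ y ⬝ᵥ Qt.mulVec y)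
    (hmult : ∃ v w : Fin (n+1) → ℝ, LinearIndependent ℝ ![v, w] ∧
      Qt.mulVec v = lam • v ∧ Qt.mulVec w = lam • w)
    (hherm : ∀ t : ℝ, (borderedV Qt gt t).IsHermitian)
    (t : ℝ) (ht : t ∈ Set.Ioo (0:ℝ) 1) :
    ∃ σ : (Fin (n+1) ⊕ Unit) ≃ Fin (n+2),
      Monotone (fun i => (hherm t).eigenvalues (σ.symm i)) ∧
      (hherm t).eigenvalues (σ.symm 1) = 1 - t + t * lam := by
  obtain ⟨v, w, hvw, hv, hw⟩ := hmult
  obtain ⟨σ, hσ⟩ := exists_equiv_fin_monotone (hherm t).eigenvalues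
    (Fintype.equivFinOfCardEq (n := n + 2) (by simp))
  refine ⟨σ, hσ, le_antisymm ?_ ?_⟩
  · obtain ⟨k, hk, hle⟩ := (hherm t).exists_ne_eigenvalue_le_of_le_on_span_pair
      (linearIndependent_pair_sumElim_zero hvw)
      (fun x hx => (dotProduct_borderedV_mulVec_of_mem_span Qt gt t hv hw hx).le) (σ.symm 0)
    calc (hherm t).eigenvalues (σ.symm 1)
        ≤ (hherm t).eigenvalues (σ.symm (σ k)) :=
          hσ (Fin.one_le_of_ne_zero (σ.eq_symm_apply.not.mp hk))
      _ ≤ 1 - t + t * lam := by rwa [σ.symm_apply_apply]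
  · rcases (hherm t).le_eigenvalues_or_of_le_on_ker (LinearMap.proj (Sum.inr ()))
      (le_dotProduct_borderedV_mulVec Qt gt t hlb ht.1.le) (σ.symm.injective.ne zero_ne_one)
      with h | h
    · exact h.trans (hσ (Fin.zero_le 1))
    · exact h

theorem second_smallest_eigenvalue {n : ℕ} (Qt : Matrix (Fin (n+1)) (Fin (n+1)) ℝ)
    (gt : Fin (n+1) → ℝ) (lam : ℝ)
    (hQ : Qt.IsSymm)
    (hlb : ∀ y : Fin (n+1) → ℝ, lam * (∑ i, y i ^ 2) ≤ y ⬝ᵥ Qt.mulVec y)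
    (hmult : ∃ v w : Fin (n+1) → ℝ, LinearIndependent ℝ ![v, w] ∧
      Qt.mulVec v = lam • v ∧ Qt.mulVec w = lam • w)
    (hherm : ∀ t : ℝ, (borderedV Qt gt t).IsHermitian)
    (t : ℝ) (ht : t ∈ Set.Ioo (0:ℝ) 1) :
    ∃ σ : (Fin (n+1) ⊕ Unit) ≃ Fin (n+2),
      Monotone (fun i => (hherm t).eigenvalues (σ.symm i)) ∧
      (hherm t).eigenvalues (σ.symm 1) = 1 - t + t * lam :=
  second_smallest_eigenvalue_general Qt gt lam hlb hmult hherm t ht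
end

section
/- With f and f_η = f + η‖·‖² as above (η > 0), let y* minimize f and y^η minimize f_η over the closed unit ball. Then ‖y* − y^η‖² ≤ ‖y*‖² − ‖y^η‖²; in particular ‖y^η‖ ≤ ‖y*‖, and if ‖y^η‖ = 1 then y^η = y*. -/
/-!
Because `λ_Q ‖y‖² ≤ yᵀQy`, the matrix `Q - λ_Q I` is positive semidefinite, so `f` is convex and
`f_η = f + η‖·‖²` is `2η`-strongly convex. At a minimizer `y^η` of a `2η`-strongly convex
function over a convex set, `f_η y^η + η‖y - y^η‖² ≤ f_η y` for every feasible `y`. Taking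
`y = y*` and subtracting `f y* ≤ f y^η` leaves `η‖y* - y^η‖² ≤ η(‖y*‖² - ‖y^η‖²)`.
-/

open Matrix Set Filter Topology

theorem LinearMap.BilinForm.convexOn_apply_self {E : Type*} [AddCommGroup E] [Module ℝ E]
    (B : LinearMap.BilinForm ℝ E) (hB : ∀ x, 0 ≤ B x x) : ConvexOn ℝ univ fun x => B x x := by
  refine ⟨convex_univ, fun x _ y _ a b ha hb hab => ?_⟩
  have hgap : a * B x x + b * B y y - B (a • x + b • y) (a • x + b • y)
      = a * b * B (x - y) (x - y) := by
    obtain rfl := eq_sub_of_add_eq hab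
    simp only [map_add, map_sub, map_smul, LinearMap.add_apply, LinearMap.sub_apply,
      LinearMap.smul_apply, smul_eq_mul]
    ring
  have := mul_nonneg (mul_nonneg ha hb) (hB (x - y))
  simp only [smul_eq_mul]
  linarith

theorem Matrix.convexOn_quadratic {ι : Type*} [Fintype ι] (A : Matrix ι ι ℝ)
    (hA : ∀ x, 0 ≤ x ⬝ᵥ A *ᵥ x) (g : ι → ℝ) (c : ℝ) :
    ConvexOn ℝ univ fun x : EuclideanSpace ℝ ι => x ⬝ᵥ A *ᵥ x + 2 * (g ⬝ᵥ x) + c := by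
  let L := (WithLp.linearEquiv 2 ℝ (ι → ℝ)).toLinearMap
  have hquad := (LinearMap.BilinForm.convexOn_apply_self
    ((dotProductBilin ℝ ℝ).compl₂ A.mulVecLin) hA).comp_linearMap L
  have hlin := ((2 : ℝ) • dotProductBilin ℝ ℝ g ∘ₗ L).convexOn convex_univ
  refine ((hquad.add hlin).add_const c).congr fun x _ => ?_
  simp [L]

theorem StrongConvexOn.add_sq_norm_sub_le_of_isMinOn {E : Type*} [NormedAddCommGroup E]
    [NormedSpace ℝ E] {s : Set E} {m : ℝ} {f : E → ℝ} {x y : E}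
    (hf : StrongConvexOn s m f) (hmin : IsMinOn f s x) (hx : x ∈ s) (hy : y ∈ s) :
    f x + m / 2 * ‖y - x‖ ^ 2 ≤ f y := by
  set c := m / 2 * ‖y - x‖ ^ 2 with hc
  -- compare `f x` with `f` at the point `(1 - t) • x + t • y` of the segment, then let `t → 0`
  have hsegment : ∀ t ∈ Ioc (0 : ℝ) 1, (1 - t) * c ≤ f y - f x := by
    rintro t ⟨ht0, ht1⟩
    have hconv := hf.2 hx hy (sub_nonneg.2 ht1) ht0.le (sub_add_cancel 1 t)
    have hle := isMinOn_iff.1 hmin _ (hf.1 hx hy (sub_nonneg.2 ht1) ht0.le (sub_add_cancel 1 t))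
    rw [norm_sub_rev] at hconv
    simp only [smul_eq_mul, ← hc] at hconv
    refine le_of_mul_le_mul_left ?_ ht0
    linarith
  have hlim : Tendsto (fun t : ℝ => (1 - t) * c) (𝓝[>] 0) (𝓝 c) := by
    have hcont : Continuous fun t : ℝ => (1 - t) * c := by fun_prop
    simpa using (hcont.tendsto 0).mono_left nhdsWithin_le_nhds
  have := le_of_tendsto hlim (eventually_of_mem (Ioc_mem_nhdsGT one_pos) hsegment)
  linarith

theorem EuclideanSpace.norm_sq_eq_dotProduct {ι : Type*} [Fintype ι] (x : EuclideanSpace ℝ ι) :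
    ‖x‖ ^ 2 = x ⬝ᵥ x := by
  rw [← real_inner_self_eq_norm_sq, EuclideanSpace.inner_eq_star_dotProduct, star_trivial]

theorem norm_le_norm_of_sq_norm_sub_le {E : Type*} [SeminormedAddCommGroup E] {x y : E}
    (h : ‖x - y‖ ^ 2 ≤ ‖x‖ ^ 2 - ‖y‖ ^ 2) : ‖y‖ ≤ ‖x‖ :=
  (sq_le_sq₀ (norm_nonneg _) (norm_nonneg _)).1 (by nlinarith [sq_nonneg ‖x - y‖])

theorem eq_of_sq_norm_sub_le_of_norm_le {E : Type*} [NormedAddCommGroup E] {x y : E}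
    (h : ‖x - y‖ ^ 2 ≤ ‖x‖ ^ 2 - ‖y‖ ^ 2) (hxy : ‖x‖ ≤ ‖y‖) : x = y := by
  have hsq : ‖x - y‖ ^ 2 ≤ 0 := by nlinarith [norm_nonneg x, norm_nonneg y]
  exact sub_eq_zero.1 (norm_eq_zero.1 (pow_eq_zero_iff two_ne_zero |>.1
    (le_antisymm hsq (sq_nonneg _))))

theorem approx_eigenvalue_solution_distance_general {n : ℕ} (Q : Matrix (Fin n) (Fin n) ℝ)
    (g : EuclideanSpace ℝ (Fin n)) (lamQ : ℝ) (η : ℝ)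
    (hlb : ∀ y : EuclideanSpace ℝ (Fin n), lamQ * ‖y‖ ^ 2 ≤ y ⬝ᵥ Q.mulVec y)
    (hη : 0 < η)
    (f fη : EuclideanSpace ℝ (Fin n) → ℝ)
    (hf : ∀ y, f y = y ⬝ᵥ (Q - lamQ • (1 : Matrix (Fin n) (Fin n) ℝ)).mulVec y
        + 2 * (g ⬝ᵥ y) + lamQ)
    (hfη : ∀ y, fη y = f y + η * ‖y‖ ^ 2)
    (ystar : EuclideanSpace ℝ (Fin n)) (hystar : ystar ∈ Metric.closedBall 0 1)
    (hystarmin : ∀ y ∈ Metric.closedBall (0 : EuclideanSpace ℝ (Fin n)) 1, f ystar ≤ f y)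
    (yeta : EuclideanSpace ℝ (Fin n)) (hyeta : yeta ∈ Metric.closedBall 0 1)
    (hyetamin : ∀ y ∈ Metric.closedBall (0 : EuclideanSpace ℝ (Fin n)) 1, fη yeta ≤ fη y) :
    ‖ystar - yeta‖ ^ 2 ≤ ‖ystar‖ ^ 2 - ‖yeta‖ ^ 2 ∧
      ‖yeta‖ ≤ ‖ystar‖ ∧ (‖yeta‖ = 1 → yeta = ystar) := by
  have hpsd : ∀ x, 0 ≤ x ⬝ᵥ (Q - lamQ • 1) *ᵥ x := fun x => by
    have := hlb (WithLp.toLp 2 x)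
    rw [EuclideanSpace.norm_sq_eq_dotProduct] at this
    simp only [sub_mulVec, smul_mulVec, one_mulVec, dotProduct_sub, dotProduct_smul, smul_eq_mul]
    simpa using this
  have hf_convex : ConvexOn ℝ univ f := by
    simpa only [← hf] using (Q - lamQ • 1).convexOn_quadratic hpsd g lamQ
  have hfη_strong : StrongConvexOn (Metric.closedBall 0 1) (2 * η) fη := by
    have hsub : (fun y => fη y - 2 * η / 2 * ‖y‖ ^ 2) = f := funext fun y => by rw [hfη]; ring
    rw [strongConvexOn_iff_convex, hsub]
    exact hf_convex.subset (subset_univ _) (convex_closedBall 0 1)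
  have hgrowth := hfη_strong.add_sq_norm_sub_le_of_isMinOn hyetamin hyeta hystar
  have hdist : ‖ystar - yeta‖ ^ 2 ≤ ‖ystar‖ ^ 2 - ‖yeta‖ ^ 2 := by
    rw [hfη, hfη] at hgrowth
    have := hystarmin yeta hyeta
    refine le_of_mul_le_mul_left ?_ hη
    linarith
  refine ⟨hdist, norm_le_norm_of_sq_norm_sub_le hdist, fun hone => ?_⟩
  refine (eq_of_sq_norm_sub_le_of_norm_le hdist ?_).symm
  simpa [hone] using hystar

theorem approx_eigenvalue_solution_distance {n : ℕ} (Q : Matrix (Fin n) (Fin n) ℝ)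
    (g : EuclideanSpace ℝ (Fin n)) (lamQ : ℝ) (η : ℝ)
    (hQ : Q.IsSymm)
    (hlb : ∀ y : EuclideanSpace ℝ (Fin n), lamQ * ‖y‖ ^ 2 ≤ y ⬝ᵥ Q.mulVec y)
    (hev : ∃ v : EuclideanSpace ℝ (Fin n), v ≠ 0 ∧ Q.mulVec v = lamQ • (v : Fin n → ℝ))
    (hneg : lamQ < 0) (hη : 0 < η)
    (f fη : EuclideanSpace ℝ (Fin n) → ℝ)
    (hf : ∀ y, f y = y ⬝ᵥ (Q - lamQ • (1 : Matrix (Fin n) (Fin n) ℝ)).mulVec y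
        + 2 * (g ⬝ᵥ y) + lamQ)
    (hfη : ∀ y, fη y = f y + η * ‖y‖ ^ 2)
    (ystar : EuclideanSpace ℝ (Fin n)) (hystar : ystar ∈ Metric.closedBall 0 1)
    (hystarmin : ∀ y ∈ Metric.closedBall (0 : EuclideanSpace ℝ (Fin n)) 1, f ystar ≤ f y)
    (yeta : EuclideanSpace ℝ (Fin n)) (hyeta : yeta ∈ Metric.closedBall 0 1)
    (hyetamin : ∀ y ∈ Metric.closedBall (0 : EuclideanSpace ℝ (Fin n)) 1, fη yeta ≤ fη y) :
    ‖ystar - yeta‖ ^ 2 ≤ ‖ystar‖ ^ 2 - ‖yeta‖ ^ 2 ∧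
      ‖yeta‖ ≤ ‖ystar‖ ∧ (‖yeta‖ = 1 → yeta = ystar) :=
  approx_eigenvalue_solution_distance_general Q g lamQ η hlb hη f fη hf hfη ystar hystar hystarmin
    yeta hyeta hyetamin
end
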